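/- arXiv:2507.15757 — 9 statements merged into one kernel-verified Lean document; each statement's English description precedes it below -/
import Mathlib

section
/- The single-letter region S^{r.c.s.} is a closed subset of ℝ². -/
open scoped BigOperators
open Filter

namespace RCS

/-- `p` is a probability mass function on the finite type `S`. -/
def IsPMF {S : Type*} [Fintype S] (p : S → ℝ) : Prop :=
  (∀ s, 0 ≤ p s) ∧ ∑ s, p s = 1

/-- `k` is a conditional probability kernel from `A` to `B`. -/
def IsKernel {A B : Type*} [Fintype B] (k : A → B → ℝ) : Prop :=
  ∀ a, IsPMF (k a)

/-- Total variation distance between two pmfs on a finite type. -/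
noncomputable def TV {S : Type*} [Fintype S] (p q : S → ℝ) : ℝ :=
  (1 / 2) * ∑ s, |p s - q s|

/-- Shannon mutual information (in nats) of a joint pmf given in curried form,
with the convention `0·log(0/x) = 0` (automatic since `Real.log 0 = 0`). -/
noncomputable def MI {U V : Type*} [Fintype U] [Fintype V] (p : U → V → ℝ) : ℝ :=
  ∑ u, ∑ v, p u v * Real.log (p u v / ((∑ v', p u v') * (∑ u', p u' v)))

/-- Markov chain `X − Z − W − Y` for a joint distribution `p` on `𝒳×𝒵×𝒲×𝒴`:
`p(x,z,w,y) = p_Z(z)·p_{X|Z}(x|z)·p_{W|Z}(w|z)·p_{Y|W}(y|w)` for some kernels. -/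
def MarkovXZWY {X Z W Y : Type*} [Fintype X] [Fintype Z] [Fintype W] [Fintype Y]
    (p : X → Z → W → Y → ℝ) : Prop :=
  ∃ (kX : Z → X → ℝ) (kW : Z → W → ℝ) (kY : W → Y → ℝ),
    IsKernel kX ∧ IsKernel kW ∧ IsKernel kY ∧
    ∀ x z w y, p x z w y =
      (∑ x', ∑ w', ∑ y', p x' z w' y') * kX z x * kW z w * kY w y

/-- The single-letter region `S^{r.c.s.}` for remote channel synthesis. -/
def Srcs {X Z Y : Type*} [Fintype X] [Fintype Z] [Fintype Y]
    (qXZ : X → Z → ℝ) (qXY : X → Y → ℝ) : Set (ℝ × ℝ) :=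
  { RRc | 0 ≤ RRc.1 ∧ 0 ≤ RRc.2 ∧
    ∃ (W : Type) (hW : Fintype W),
      letI := hW
      Fintype.card W ≤ Fintype.card Y * Fintype.card Z + 1 ∧
      ∃ p : X → Z → W → Y → ℝ,
        IsPMF (fun s : X × Z × W × Y => p s.1 s.2.1 s.2.2.1 s.2.2.2) ∧
        (∀ x z, (∑ w, ∑ y, p x z w y) = qXZ x z) ∧
        (∀ x y, (∑ z, ∑ w, p x z w y) = qXY x y) ∧
        MarkovXZWY p ∧
        MI (fun z w => ∑ x, ∑ y, p x z w y) ≤ RRc.1 ∧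
        MI (fun (xy : X × Y) w => ∑ z, p xy.1 z w xy.2) ≤ RRc.1 + RRc.2 }

/-! Every point of `S^{r.c.s.}` is already witnessed on the fixed alphabet `Fin (|𝒴|·|𝒵| + 1)`:
a smaller `𝒲` embeds into it, and extending the distribution by zero keeps the marginals, the
Markov structure and both mutual informations. For a fixed `𝒲` the admissible distributions are
the continuous image of a product of simplices (the Markov factorisation) cut down by closed
marginal constraints, hence compact; mutual information is continuous on nonnegative arrays,
being `H(U) + H(V) - H(U,V)` with `x ↦ -x log x` continuous. The region is then the projection
to `ℝ²` of a closed subset of a compact set times `ℝ²`, which is closed. -/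

open Function Real

theorem IsPMF.le_one {S : Type*} [Fintype S] {p : S → ℝ} (hp : IsPMF p) (s : S) : p s ≤ 1 :=
  hp.2 ▸ Finset.single_le_sum (fun i _ => hp.1 i) (Finset.mem_univ s)

theorem IsPMF.nonempty {S : Type*} [Fintype S] {p : S → ℝ} (hp : IsPMF p) : Nonempty S := by
  by_contra h
  rw [not_nonempty_iff] at h
  simpa using hp.2

theorem IsPMF.extend_zero {S S' : Type*} [Fintype S] [Fintype S'] {p : S → ℝ} (hp : IsPMF p)
    {f : S → S'} (hf : Injective f) : IsPMF (extend f p 0) := by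
  refine ⟨fun s' => ?_, ?_⟩
  · by_cases h : ∃ s, f s = s'
    · obtain ⟨s, rfl⟩ := h
      rw [hf.extend_apply]
      exact hp.1 s
    · rw [extend_apply' _ _ _ h]
      rfl
  · rw [← hp.2]
    exact (Fintype.sum_of_injective f hf p (extend f p 0) (fun s' hs' => extend_apply' _ _ _ hs')
      (fun s => (hf.extend_apply _ _ s).symm)).symm

theorem IsKernel.extend {A A' B : Type*} [Fintype B] {k : A → B → ℝ} (hk : IsKernel k)
    {f : A → A'} (hf : Injective f) {e : A' → B → ℝ} (he : IsKernel e) :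
    IsKernel (extend f k e) := by
  intro a'
  by_cases h : ∃ a, f a = a'
  · obtain ⟨a, rfl⟩ := h
    rw [hf.extend_apply]
    exact hk a
  · rw [extend_apply' _ _ _ h]
    exact he a'

theorem isClosed_setOf_isPMF {S : Type*} [Fintype S] : IsClosed {p : S → ℝ | IsPMF p} := by
  simp only [IsPMF, Set.ofPred_and, Set.ofPred_forall]
  exact (isClosed_iInter fun s => isClosed_le continuous_const (continuous_apply s)).inter
    (isClosed_eq (by fun_prop) continuous_const)

theorem isCompact_setOf_isPMF {S : Type*} [Fintype S] : IsCompact {p : S → ℝ | IsPMF p} :=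
  isCompact_Icc.of_isClosed_subset isClosed_setOf_isPMF fun _ hp =>
    ⟨fun s => hp.1 s, fun s => hp.le_one s⟩

theorem isCompact_setOf_isKernel {A S : Type*} [Fintype A] [Fintype S] :
    IsCompact {k : A → S → ℝ | IsKernel k} := by
  convert isCompact_univ_pi fun _ : A => isCompact_setOf_isPMF (S := S) using 1
  ext k
  simp [IsKernel]

section MutualInformation

variable {U V : Type*} [Fintype U] [Fintype V]

theorem MI_eq_entropy_add_entropy_sub_entropy (p : U → V → ℝ) (hp : ∀ u v, 0 ≤ p u v) :
    MI p = ∑ u, negMulLog (∑ v, p u v) + ∑ v, negMulLog (∑ u, p u v)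
      - ∑ u, ∑ v, negMulLog (p u v) := by
  have hterm : ∀ u v, p u v * log (p u v / ((∑ v', p u v') * (∑ u', p u' v)))
      = -negMulLog (p u v) - p u v * log (∑ v', p u v') - p u v * log (∑ u', p u' v) := by
    intro u v
    rcases (hp u v).eq_or_lt with h0 | hpos
    · simp [← h0]
    have hrow : 0 < ∑ v', p u v' :=
      hpos.trans_le (Finset.single_le_sum (fun i _ => hp u i) (Finset.mem_univ v))
    have hcol : 0 < ∑ u', p u' v :=
      hpos.trans_le (Finset.single_le_sum (fun i _ => hp i v) (Finset.mem_univ u))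
    rw [log_div hpos.ne' (mul_pos hrow hcol).ne', log_mul hrow.ne' hcol.ne', negMulLog]
    ring
  unfold MI
  simp only [hterm, Finset.sum_sub_distrib, ← Finset.sum_mul]
  rw [Finset.sum_comm (f := fun u v => p u v * log (∑ u', p u' v))]
  simp only [← Finset.sum_mul, negMulLog, neg_mul, Finset.sum_neg_distrib]
  ring

theorem continuousOn_MI : ContinuousOn (MI : (U → V → ℝ) → ℝ) {p | ∀ u v, 0 ≤ p u v} := by
  have h : Continuous fun p : U → V → ℝ => ∑ u, negMulLog (∑ v, p u v)
      + ∑ v, negMulLog (∑ u, p u v) - ∑ u, ∑ v, negMulLog (p u v) := by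
    fun_prop
  exact h.continuousOn.congr fun p hp => MI_eq_entropy_add_entropy_sub_entropy p hp

theorem MI_eq_of_injective {V' : Type*} [Fintype V'] {f : V → V'} (hf : Injective f)
    {p : U → V → ℝ} {p' : U → V' → ℝ} (hp' : ∀ u v, p' u (f v) = p u v)
    (hzero : ∀ u, ∀ v' ∉ Set.range f, p' u v' = 0) : MI p' = MI p := by
  unfold MI
  refine Finset.sum_congr rfl fun u _ => ?_
  have hrow : ∑ v', p' u v' = ∑ v, p u v :=
    (Fintype.sum_of_injective f hf _ _ (hzero u) fun v => (hp' u v).symm).symm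
  refine (Fintype.sum_of_injective f hf _ _ (fun v' hv' => by simp [hzero u v' hv'])
    fun v => ?_).symm
  simp only [hp', hrow]

end MutualInformation

section Markov

variable {X Z W Y : Type*}

def markovJoint (θ : (Z → ℝ) × (Z → X → ℝ) × (Z → W → ℝ) × (W → Y → ℝ)) :
    X → Z → W → Y → ℝ :=
  fun x z w y => θ.1 z * θ.2.1 z x * θ.2.2.1 z w * θ.2.2.2 w y

def markovParams (X Z W Y : Type*) [Fintype X] [Fintype Z] [Fintype W] [Fintype Y] :
    Set ((Z → ℝ) × (Z → X → ℝ) × (Z → W → ℝ) × (W → Y → ℝ)) :=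
  {θ | IsPMF θ.1 ∧ IsKernel θ.2.1 ∧ IsKernel θ.2.2.1 ∧ IsKernel θ.2.2.2}

theorem continuous_markovJoint [Fintype X] [Fintype Y] :
    Continuous (markovJoint : _ → X → Z → W → Y → ℝ) := by
  unfold markovJoint
  fun_prop

variable [Fintype X] [Fintype Z] [Fintype W] [Fintype Y]

theorem isCompact_markovParams : IsCompact (markovParams X Z W Y) :=
  isCompact_setOf_isPMF.prod <| isCompact_setOf_isKernel.prod <|
    isCompact_setOf_isKernel.prod isCompact_setOf_isKernel

variable {θ : (Z → ℝ) × (Z → X → ℝ) × (Z → W → ℝ) × (W → Y → ℝ)}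

theorem markovJoint_nonneg (hθ : θ ∈ markovParams X Z W Y) (x : X) (z : Z) (w : W) (y : Y) :
    0 ≤ markovJoint θ x z w y :=
  mul_nonneg (mul_nonneg (mul_nonneg (hθ.1.1 z) ((hθ.2.1 z).1 x)) ((hθ.2.2.1 z).1 w))
    ((hθ.2.2.2 w).1 y)

theorem sum_markovJoint (hθ : θ ∈ markovParams X Z W Y) (z : Z) :
    ∑ x, ∑ w, ∑ y, markovJoint θ x z w y = θ.1 z := by
  simp only [markovJoint, ← Finset.mul_sum, (hθ.2.2.2 _).2, mul_one, (hθ.2.2.1 z).2,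
    (hθ.2.1 z).2]

theorem isPMF_markovJoint (hθ : θ ∈ markovParams X Z W Y) :
    IsPMF (fun s : X × Z × W × Y => markovJoint θ s.1 s.2.1 s.2.2.1 s.2.2.2) := by
  refine ⟨fun s => markovJoint_nonneg hθ _ _ _ _, ?_⟩
  simp only [Fintype.sum_prod_type]
  rw [Finset.sum_comm]
  simp only [sum_markovJoint hθ]
  exact hθ.1.2

theorem markovXZWY_markovJoint (hθ : θ ∈ markovParams X Z W Y) :
    MarkovXZWY (markovJoint θ) :=
  ⟨θ.2.1, θ.2.2.1, θ.2.2.2, hθ.2.1, hθ.2.2.1, hθ.2.2.2, fun x z w y => by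
    rw [sum_markovJoint hθ]
    rfl⟩

theorem exists_markovJoint_eq {p : X → Z → W → Y → ℝ}
    (hp : IsPMF (fun s : X × Z × W × Y => p s.1 s.2.1 s.2.2.1 s.2.2.2)) (hM : MarkovXZWY p) :
    ∃ θ ∈ markovParams X Z W Y, markovJoint θ = p := by
  obtain ⟨kX, kW, kY, hkX, hkW, hkY, hfactor⟩ := hM
  refine ⟨(fun z => ∑ x, ∑ w, ∑ y, p x z w y, kX, kW, kY), ⟨⟨fun z => ?_, ?_⟩, hkX, hkW, hkY⟩,
    ?_⟩
  · exact Finset.sum_nonneg fun x _ => Finset.sum_nonneg fun w _ =>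
      Finset.sum_nonneg fun y _ => hp.1 (x, z, w, y)
  · rw [Finset.sum_comm, ← hp.2]
    simp only [Fintype.sum_prod_type]
  · funext x z w y
    exact (hfactor x z w y).symm

theorem exists_markovJoint_extend {W' : Type*} [Fintype W'] (hθ : θ ∈ markovParams X Z W Y)
    {f : W → W'} (hf : Injective f) :
    ∃ θ' ∈ markovParams X Z W' Y,
      (∀ x z w y, markovJoint θ' x z (f w) y = markovJoint θ x z w y) ∧
      ∀ x z, ∀ w' ∉ Set.range f, ∀ y, markovJoint θ' x z w' y = 0 := by
  -- off the range of `f`, `p_{Y|W}` is extended by some kernel; `W` is nonempty as `p_{W|Z}` is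
  obtain ⟨z₀⟩ := hθ.1.nonempty
  obtain ⟨w₀⟩ := (hθ.2.2.1 z₀).nonempty
  refine ⟨(θ.1, θ.2.1, fun z => extend f (θ.2.2.1 z) 0,
      extend f θ.2.2.2 fun _ => θ.2.2.2 w₀),
    ⟨hθ.1, hθ.2.1, fun z => (hθ.2.2.1 z).extend_zero hf,
      hθ.2.2.2.extend hf fun _ => hθ.2.2.2 w₀⟩, fun x z w y => ?_, fun x z w' hw' y => ?_⟩
  · simp only [markovJoint, hf.extend_apply]
  · simp only [markovJoint, extend_apply' _ _ _ hw', Pi.zero_apply, mul_zero, zero_mul]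

end Markov

theorem isClosed_image_snd_inter_prod_univ {α β : Type*} [TopologicalSpace α]
    [TopologicalSpace β] {K : Set α} (hK : IsCompact K) {T : Set (α × β)} (hT : IsClosed T) :
    IsClosed (Prod.snd '' (T ∩ K ×ˢ Set.univ)) := by
  have : CompactSpace K := isCompact_iff_compactSpace.mp hK
  have hT' : IsClosed (Prod.map ((↑) : K → α) id ⁻¹' T) :=
    hT.preimage (continuous_subtype_val.prodMap continuous_id)
  convert isClosedMap_snd_of_compactSpace _ hT' using 1
  ext r
  constructor
  · rintro ⟨⟨a, r⟩, ⟨hT, ha, -⟩, rfl⟩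
    exact ⟨(⟨a, ha⟩, r), hT, rfl⟩
  · rintro ⟨⟨a, r⟩, hT, rfl⟩
    exact ⟨(a, r), ⟨hT, a.2, trivial⟩, rfl⟩

section Region

variable {X Z Y : Type*} [Fintype X] [Fintype Z] [Fintype Y]

def admissibleJoints (qXZ : X → Z → ℝ) (qXY : X → Y → ℝ) (W : Type*) [Fintype W] :
    Set (X → Z → W → Y → ℝ) :=
  markovJoint '' markovParams X Z W Y ∩
    {p | (∀ x z, ∑ w, ∑ y, p x z w y = qXZ x z) ∧ ∀ x y, ∑ z, ∑ w, p x z w y = qXY x y}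

def rateRegion (qXZ : X → Z → ℝ) (qXY : X → Y → ℝ) (W : Type*) [Fintype W] : Set (ℝ × ℝ) :=
  {r | 0 ≤ r.1 ∧ 0 ≤ r.2 ∧ ∃ p ∈ admissibleJoints qXZ qXY W,
    MI (fun z w => ∑ x, ∑ y, p x z w y) ≤ r.1 ∧
    MI (fun (xy : X × Y) w => ∑ z, p xy.1 z w xy.2) ≤ r.1 + r.2}

variable (qXZ : X → Z → ℝ) (qXY : X → Y → ℝ) (W : Type*) [Fintype W]

theorem isCompact_admissibleJoints : IsCompact (admissibleJoints qXZ qXY W) := by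
  refine (isCompact_markovParams.image continuous_markovJoint).inter_right ?_
  simp only [Set.ofPred_and, Set.ofPred_forall]
  exact (isClosed_iInter fun x => isClosed_iInter fun z =>
      isClosed_eq (by fun_prop) continuous_const).inter
    (isClosed_iInter fun x => isClosed_iInter fun y =>
      isClosed_eq (by fun_prop) continuous_const)

theorem isClosed_rateRegion : IsClosed (rateRegion qXZ qXY W) := by
  set K := admissibleJoints qXZ qXY W
  set g : (X → Z → W → Y → ℝ) → ℝ × ℝ := fun p =>
    (MI fun z w => ∑ x, ∑ y, p x z w y, MI fun (xy : X × Y) w => ∑ z, p xy.1 z w xy.2)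
  have hnonneg : ∀ p ∈ K, ∀ x z w y, 0 ≤ p x z w y := by
    rintro _ ⟨⟨θ, hθ, rfl⟩, -⟩
    exact markovJoint_nonneg hθ
  have hg : ContinuousOn g K := by
    refine ContinuousOn.prodMk
      (continuousOn_MI.comp (by fun_prop) fun p hp z w => ?_)
      (continuousOn_MI.comp (by fun_prop) fun p hp xy w => ?_)
    · exact Finset.sum_nonneg fun x _ => Finset.sum_nonneg fun y _ => hnonneg p hp x z w y
    · exact Finset.sum_nonneg fun z _ => hnonneg p hp xy.1 z w xy.2
  set T : Set ((ℝ × ℝ) × (ℝ × ℝ)) :=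
    {c | 0 ≤ c.2.1 ∧ 0 ≤ c.2.2 ∧ c.1.1 ≤ c.2.1 ∧ c.1.2 ≤ c.2.1 + c.2.2}
  have hT : IsClosed T := by
    simp only [T, Set.ofPred_and]
    exact (isClosed_le (by fun_prop) (by fun_prop)).inter <|
        (isClosed_le (by fun_prop) (by fun_prop)).inter <|
          (isClosed_le (by fun_prop) (by fun_prop)).inter
            (isClosed_le (by fun_prop) (by fun_prop))
  convert isClosed_image_snd_inter_prod_univ
    ((isCompact_admissibleJoints qXZ qXY W).image_of_continuousOn hg) hT using 1
  ext r
  constructor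
  · rintro ⟨h1, h2, p, hp, hb1, hb2⟩
    exact ⟨(g p, r), ⟨⟨h1, h2, hb1, hb2⟩, ⟨p, hp, rfl⟩, trivial⟩, rfl⟩
  · rintro ⟨⟨_, r⟩, ⟨⟨h1, h2, hb1, hb2⟩, ⟨p, hp, rfl⟩, -⟩, rfl⟩
    exact ⟨h1, h2, p, hp, hb1, hb2⟩

theorem rateRegion_mono {W' : Type*} [Fintype W'] {f : W → W'} (hf : Injective f) :
    rateRegion qXZ qXY W ⊆ rateRegion qXZ qXY W' := by
  rintro r ⟨h1, h2, _, ⟨⟨θ, hθ, rfl⟩, hXZ, hXY⟩, hb1, hb2⟩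
  obtain ⟨θ', hθ', hval, hzero⟩ := exists_markovJoint_extend hθ hf
  have hsum : ∀ x z y, ∑ w', markovJoint θ' x z w' y = ∑ w, markovJoint θ x z w y :=
    fun x z y => (Fintype.sum_of_injective f hf _ _ (fun w' hw' => hzero x z w' hw' y)
      fun w => (hval x z w y).symm).symm
  refine ⟨h1, h2, markovJoint θ', ⟨⟨θ', hθ', rfl⟩, fun x z => ?_, fun x y => ?_⟩, ?_, ?_⟩
  · rw [← hXZ x z, Finset.sum_comm, Finset.sum_comm (γ := W)]
    simp only [hsum]
  · simp only [hsum, hXY x y]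
  · rwa [MI_eq_of_injective hf (p := fun z w => ∑ x, ∑ y, markovJoint θ x z w y) (fun z w => by simp only [hval])
      fun z w' hw' => by simp only [hzero _ _ w' hw', Finset.sum_const_zero]]
  · rwa [MI_eq_of_injective hf (p := fun (xy : X × Y) w => ∑ z, markovJoint θ xy.1 z w xy.2)
      (fun xy w => by simp only [hval])
      fun xy w' hw' => by simp only [hzero _ _ w' hw', Finset.sum_const_zero]]

theorem mem_srcs_iff {r : ℝ × ℝ} :
    r ∈ Srcs qXZ qXY ↔ ∃ (W : Type) (_ : Fintype W),
      Fintype.card W ≤ Fintype.card Y * Fintype.card Z + 1 ∧ r ∈ rateRegion qXZ qXY W := by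
  constructor
  · rintro ⟨h1, h2, W, _, hcard, p, hp, hXZ, hXY, hM, hb1, hb2⟩
    obtain ⟨θ, hθ, rfl⟩ := exists_markovJoint_eq hp hM
    exact ⟨W, _, hcard, h1, h2, _, ⟨⟨θ, hθ, rfl⟩, hXZ, hXY⟩, hb1, hb2⟩
  · rintro ⟨W, _, hcard, h1, h2, _, ⟨⟨θ, hθ, rfl⟩, hXZ, hXY⟩, hb1, hb2⟩
    exact ⟨h1, h2, W, _, hcard, _, isPMF_markovJoint hθ, hXZ, hXY, markovXZWY_markovJoint hθ,
      hb1, hb2⟩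

theorem srcs_eq_rateRegion :
    Srcs qXZ qXY = rateRegion qXZ qXY (Fin (Fintype.card Y * Fintype.card Z + 1)) := by
  ext r
  rw [mem_srcs_iff]
  constructor
  · rintro ⟨W, _, hcard, hr⟩
    obtain ⟨f⟩ := Function.Embedding.nonempty_of_card_le (β := Fin _) (by simpa using hcard)
    exact rateRegion_mono qXZ qXY W f.injective hr
  · exact fun hr => ⟨_, _, by simp, hr⟩

end Region

theorem srcs_isClosed_general
    {X Z Y : Type*} [Fintype X] [Fintype Z] [Fintype Y]
    (qXZ : X → Z → ℝ) (qXY : X → Y → ℝ) :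
    IsClosed (Srcs qXZ qXY) := by
  rw [srcs_eq_rateRegion]
  exact isClosed_rateRegion qXZ qXY _

/-- the single-letter region `S^{r.c.s.}` is a closed subset of `ℝ²`. -/
theorem srcs_isClosed
    {X Z Y : Type*} [Fintype X] [Fintype Z] [Fintype Y]
    (qXZ : X → Z → ℝ) (qXY : X → Y → ℝ)
    (hqXZ : IsPMF (fun s : X × Z => qXZ s.1 s.2))
    (hqXY : IsPMF (fun s : X × Y => qXY s.1 s.2)) :
    IsClosed (Srcs qXZ qXY) :=
  srcs_isClosed_general qXZ qXY

end RCS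
end

section
/- The intersection over all ε ∈ (0,1/4) of the relaxed regions S_ε equals the single-letter region S^{r.c.s.}. -/
open scoped BigOperators
open Filter

namespace RCS

/-- `g(ε) := 4ε·(log|𝒳| + log|𝒴| + log(1/ε))`. -/
noncomputable def g (X Y : Type*) [Fintype X] [Fintype Y] (ε : ℝ) : ℝ :=
  4 * ε * (Real.log (Fintype.card X) + Real.log (Fintype.card Y) + Real.log (1 / ε))

/-- The relaxed region `S_ε`. -/
def Seps {X Z Y : Type*} [Fintype X] [Fintype Z] [Fintype Y]
    (qXZ : X → Z → ℝ) (qXY : X → Y → ℝ) (ε : ℝ) : Set (ℝ × ℝ) :=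
  { RRc | 0 ≤ RRc.1 ∧ 0 ≤ RRc.2 ∧
    ∃ (W : Type) (hW : Fintype W),
      letI := hW
      Fintype.card W ≤ Fintype.card Y * Fintype.card Z + 1 ∧
      ∃ p : X → Z → W → Y → ℝ,
        IsPMF (fun s : X × Z × W × Y => p s.1 s.2.1 s.2.2.1 s.2.2.2) ∧
        (∀ x z, (∑ w, ∑ y, p x z w y) = qXZ x z) ∧
        TV (fun xy : X × Y => ∑ z, ∑ w, p xy.1 z w xy.2)
           (fun xy : X × Y => qXY xy.1 xy.2) ≤ ε ∧
        MarkovXZWY p ∧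
        MI (fun z w => ∑ x, ∑ y, p x z w y) ≤ RRc.1 ∧
        MI (fun (xy : X × Y) w => ∑ z, p xy.1 z w xy.2) - 2 * g X Y ε ≤ RRc.1 + RRc.2 }

open Function

lemma partialInv_none {W W' : Type*} (f : W → W') (w' : W') (h : ∀ w, f w ≠ w') :
    Function.partialInv f w' = none := by
  unfold Function.partialInv
  exact dif_neg (by push_neg; exact fun w => h w)

lemma reindex {W W' : Type*} [Fintype W] [Fintype W'] {f : W → W'} (hf : Injective f)
    (G : W' → ℝ) (h0 : ∀ w', (∀ w, f w ≠ w') → G w' = 0) :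
    ∑ w', G w' = ∑ w, G (f w) := by
  classical
  rw [← Finset.sum_image (fun a _ b _ h => hf h)]
  refine (Finset.sum_subset (Finset.subset_univ _) fun w' _ hw' => ?_).symm
  exact h0 w' fun w hw => hw' (Finset.mem_image.2 ⟨w, Finset.mem_univ w, hw⟩)

lemma reindex_elim {W W' : Type*} [Fintype W] [Fintype W'] {f : W → W'} (hf : Injective f)
    (F : W → ℝ) :
    ∑ w', (Function.partialInv f w').elim 0 F = ∑ w, F w := by
  rw [reindex hf _ (fun w' h => by simp [partialInv_none f w' h])]
  refine Finset.sum_congr rfl fun w _ => ?_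
  simp [partialInv_left hf]

lemma elim_sum {W S : Type*} [Fintype S] (o : Option W) (F : W → S → ℝ) :
    ∑ s, o.elim 0 (fun w => F w s) = o.elim 0 (fun w => ∑ s, F w s) := by
  cases o <;> simp

lemma elim_some {W : Type*} {b : ℝ} (F : W → ℝ) (w : W) : (some w).elim b F = F w := rfl

lemma MI_ext {U W W' : Type*} [Fintype U] [Fintype W] [Fintype W'] {f : W → W'}
    (hf : Injective f) (M : U → W → ℝ) :
    MI (fun u w' => (Function.partialInv f w').elim 0 (M u)) = MI M := by
  unfold MI
  refine Finset.sum_congr rfl fun u _ => ?_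
  have hrow : ∀ u', (∑ v' : W', (Function.partialInv f v').elim 0 (M u')) = ∑ v', M u' v' :=
    fun u' => reindex_elim hf (M u')
  rw [reindex hf _ (fun w' h => by simp [partialInv_none f w' h])]
  refine Finset.sum_congr rfl fun w _ => ?_
  simp only [partialInv_left hf, elim_some, hrow]

lemma tendsto_mul_log {a b : ℕ → ℝ} {A B : ℝ}
    (ha : Tendsto a atTop (nhds A)) (hb : Tendsto b atTop (nhds B))
    (h0 : ∀ n, 0 ≤ a n) (hab : ∀ n, a n ≤ b n) :
    Tendsto (fun n => a n * Real.log (b n)) atTop (nhds (A * Real.log B)) := by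
  have hB : 0 ≤ B := ge_of_tendsto' hb (fun n => (h0 n).trans (hab n))
  rcases hB.eq_or_lt with hB0 | hB0
  · have hA : A = 0 := le_antisymm (by simpa [← hB0] using le_of_tendsto_of_tendsto' ha hb hab)
      (ge_of_tendsto' ha h0)
    have hblog : Tendsto (fun n => |b n * Real.log (b n)|) atTop (nhds 0) := by
      have h2 := ((Real.continuous_mul_log.tendsto B).comp hb).abs
      rw [← hB0] at h2
      simpa using h2
    have h3 : Tendsto (fun n => a n * Real.log (b n)) atTop (nhds 0) := by
      apply squeeze_zero_norm _ hblog
      intro n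
      rw [Real.norm_eq_abs, abs_mul, abs_mul, abs_of_nonneg (h0 n),
        abs_of_nonneg ((h0 n).trans (hab n))]
      exact mul_le_mul_of_nonneg_right (hab n) (abs_nonneg _)
    simpa [hA, ← hB0] using h3
  · exact ha.mul (((Real.continuousAt_log hB0.ne').tendsto).comp hb)


lemma MI_eq {U V : Type*} [Fintype U] [Fintype V] (M : U → V → ℝ) (h : ∀ u v, 0 ≤ M u v) :
    MI M = ∑ u, ∑ v, (M u v * Real.log (M u v) - M u v * Real.log (∑ v', M u v')
      - M u v * Real.log (∑ u', M u' v)) := by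
  unfold MI
  refine Finset.sum_congr rfl fun u _ => Finset.sum_congr rfl fun v _ => ?_
  rcases (h u v).eq_or_lt with h0 | h0
  · simp [← h0]
  · have hr : 0 < ∑ v', M u v' :=
      lt_of_lt_of_le h0 (Finset.single_le_sum (fun i _ => h u i) (Finset.mem_univ v))
    have hc : 0 < ∑ u', M u' v :=
      lt_of_lt_of_le h0 (Finset.single_le_sum (fun i _ => h i v) (Finset.mem_univ u))
    rw [Real.log_div h0.ne' (by positivity), Real.log_mul hr.ne' hc.ne']
    ring

lemma MI_tendsto {U V : Type*} [Fintype U] [Fintype V] {M : ℕ → U → V → ℝ} {L : U → V → ℝ}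
    (hM : ∀ u v, Tendsto (fun n => M n u v) atTop (nhds (L u v)))
    (h0 : ∀ n u v, 0 ≤ M n u v) :
    Tendsto (fun n => MI (M n)) atTop (nhds (MI L)) := by
  have hL : ∀ u v, 0 ≤ L u v := fun u v => ge_of_tendsto' (hM u v) (fun n => h0 n u v)
  have hrow : ∀ u, Tendsto (fun n => ∑ v', M n u v') atTop (nhds (∑ v', L u v')) :=
    fun u => tendsto_finset_sum _ (fun v' _ => hM u v')
  have hcol : ∀ v, Tendsto (fun n => ∑ u', M n u' v) atTop (nhds (∑ u', L u' v)) :=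
    fun v => tendsto_finset_sum _ (fun u' _ => hM u' v)
  have key : Tendsto (fun n => ∑ u, ∑ v, (M n u v * Real.log (M n u v)
      - M n u v * Real.log (∑ v', M n u v') - M n u v * Real.log (∑ u', M n u' v)))
      atTop (nhds (∑ u, ∑ v, (L u v * Real.log (L u v) - L u v * Real.log (∑ v', L u v')
      - L u v * Real.log (∑ u', L u' v)))) := by
    refine tendsto_finset_sum _ fun u _ => tendsto_finset_sum _ fun v _ => ?_
    refine Tendsto.sub (Tendsto.sub ?_ ?_) ?_
    · exact tendsto_mul_log (hM u v) (hM u v) (fun n => h0 n u v) (fun n => le_rfl)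
    · exact tendsto_mul_log (hM u v) (hrow u) (fun n => h0 n u v)
        (fun n => Finset.single_le_sum (fun i _ => h0 n u i) (Finset.mem_univ v))
    · exact tendsto_mul_log (hM u v) (hcol v) (fun n => h0 n u v)
        (fun n => Finset.single_le_sum (fun i _ => h0 n i v) (Finset.mem_univ u))
  have e1 : (fun n => MI (M n)) = fun n => ∑ u, ∑ v, (M n u v * Real.log (M n u v)
      - M n u v * Real.log (∑ v', M n u v') - M n u v * Real.log (∑ u', M n u' v)) := by
    funext n; exact MI_eq (M n) (h0 n)
  rw [e1, MI_eq L hL]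
  exact key


lemma pmf_le_one {S : Type*} [Fintype S] {p : S → ℝ} (h : IsPMF p) (s : S) : p s ≤ 1 := by
  have h2 := Finset.single_le_sum (fun t _ => h.1 t) (Finset.mem_univ s)
  rwa [h.2] at h2

lemma normalize {X Z Y : Type*} [Fintype X] [Fintype Z] [Fintype Y]
    (qXZ : X → Z → ℝ) (qXY : X → Y → ℝ) {ε R Rc : ℝ} (hY : Nonempty Y)
    (h : (R, Rc) ∈ Seps qXZ qXY ε) :
    ∃ (p : X → Z → Fin (Fintype.card Y * Fintype.card Z + 1) → Y → ℝ)
      (kX : Z → X → ℝ) (kW : Z → Fin (Fintype.card Y * Fintype.card Z + 1) → ℝ)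
      (kY : Fin (Fintype.card Y * Fintype.card Z + 1) → Y → ℝ),
      IsPMF (fun s : X × Z × Fin (Fintype.card Y * Fintype.card Z + 1) × Y =>
        p s.1 s.2.1 s.2.2.1 s.2.2.2) ∧
      (∀ x z, (∑ w, ∑ y, p x z w y) = qXZ x z) ∧
      TV (fun xy : X × Y => ∑ z, ∑ w, p xy.1 z w xy.2) (fun xy : X × Y => qXY xy.1 xy.2) ≤ ε ∧
      IsKernel kX ∧ IsKernel kW ∧ IsKernel kY ∧
      (∀ x z w y, p x z w y = (∑ x', ∑ w', ∑ y', p x' z w' y') * kX z x * kW z w * kY w y) ∧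
      MI (fun z w => ∑ x, ∑ y, p x z w y) ≤ R ∧
      MI (fun (xy : X × Y) w => ∑ z, p xy.1 z w xy.2) - 2 * g X Y ε ≤ R + Rc := by
  obtain ⟨hR, hRc, W, instW, hcard, p0, hpmf, hmarg, hTV, hMarkov, hMI1, hMI2⟩ := h
  obtain ⟨kX0, kW0, kY0, hkX0, hkW0, hkY0, heq⟩ := hMarkov
  set N := Fintype.card Y * Fintype.card Z + 1 with hN
  have hle : Fintype.card W ≤ Fintype.card (Fin N) := by simpa using hcard
  obtain ⟨f⟩ := Function.Embedding.nonempty_of_card_le hle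
  have hf : Injective ⇑f := f.injective
  set pp : X → Z → Fin N → Y → ℝ :=
    fun x z w' y => (Function.partialInv ⇑f w').elim 0 (fun w => p0 x z w y) with hpp
  have hWsum : ∀ (F : W → Y → ℝ),
      (∑ w' : Fin N, ∑ y, (Function.partialInv ⇑f w').elim 0 (fun w => F w y))
        = ∑ w, ∑ y, F w y := by
    intro F
    rw [Finset.sum_congr rfl (fun w' _ => elim_sum (Function.partialInv ⇑f w') F)]
    exact reindex_elim hf _
  have hp0 : ∀ x z w y, 0 ≤ p0 x z w y := fun x z w y => hpmf.1 (x, z, w, y)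
  have hpp0 : ∀ x z w' y, 0 ≤ pp x z w' y := by
    intro x z w' y
    cases hc : Function.partialInv ⇑f w' <;> simp [hpp, hc, hp0]
  refine ⟨pp, kX0, fun z w' => (Function.partialInv ⇑f w').elim 0 (fun w => kW0 z w),
    fun w' y => (Function.partialInv ⇑f w').elim ((Fintype.card Y : ℝ)⁻¹) (fun w => kY0 w y),
    ⟨fun s => hpp0 s.1 s.2.1 s.2.2.1 s.2.2.2, ?_⟩, ?_, ?_, hkX0, ?_, ?_, ?_, ?_, ?_⟩
  · -- total sum = 1
    have h1 := hpmf.2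
    rw [Fintype.sum_prod_type] at h1 ⊢
    simp only [Fintype.sum_prod_type] at h1 ⊢
    rw [← h1]
    refine Finset.sum_congr rfl fun x _ => Finset.sum_congr rfl fun z _ => ?_
    exact hWsum (fun w y => p0 x z w y)
  · -- marginal
    intro x z
    rw [← hmarg x z]
    exact hWsum (fun w y => p0 x z w y)
  · -- TV
    have hfe : (fun xy : X × Y => ∑ z, ∑ w' : Fin N, pp xy.1 z w' xy.2)
        = fun xy : X × Y => ∑ z, ∑ w, p0 xy.1 z w xy.2 := by
      funext xy
      refine Finset.sum_congr rfl fun z _ => ?_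
      exact reindex_elim hf _
    rw [hfe]
    exact hTV
  · -- kW kernel
    intro z
    constructor
    · intro w'
      cases hc : Function.partialInv ⇑f w' <;> simp [hc, (hkW0 z).1]
    · rw [reindex_elim hf]
      exact (hkW0 z).2
  · -- kY kernel
    intro w'
    cases hc : Function.partialInv ⇑f w' with
    | none =>
        simp only [hc]
        constructor
        · intro y
          show (0:ℝ) ≤ (Fintype.card Y : ℝ)⁻¹
          positivity
        · show ∑ _y : Y, (Fintype.card Y : ℝ)⁻¹ = 1
          rw [Finset.sum_const, nsmul_eq_mul, Finset.card_univ]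
          exact mul_inv_cancel₀ (Nat.cast_ne_zero.2 Fintype.card_ne_zero)
    | some w =>
        simp only [hc]
        exact hkY0 w
  · -- Markov equation
    intro x z w' y
    have hm : (∑ x', ∑ w'' : Fin N, ∑ y', pp x' z w'' y')
        = ∑ x', ∑ w, ∑ y', p0 x' z w y' :=
      Finset.sum_congr rfl fun x' _ => hWsum (fun w y' => p0 x' z w y')
    cases hc : Function.partialInv ⇑f w' with
    | none => simp [hpp, hc]
    | some w =>
        simp only [hpp, hc, elim_some]
        rw [hm]
        exact heq x z w y
  · -- MI 1
    have hfe : (fun z (w' : Fin N) => ∑ x, ∑ y, pp x z w' y)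
        = fun z w' => (Function.partialInv ⇑f w').elim 0 (fun w => ∑ x, ∑ y, p0 x z w y) := by
      funext z w'
      cases hc : Function.partialInv ⇑f w' <;> simp [hpp, hc]
    rw [hfe, MI_ext hf]
    exact hMI1
  · -- MI 2
    have hfe : (fun (xy : X × Y) (w' : Fin N) => ∑ z, pp xy.1 z w' xy.2)
        = fun (xy : X × Y) w' =>
          (Function.partialInv ⇑f w').elim 0 (fun w => ∑ z, p0 xy.1 z w xy.2) := by
      funext xy w'
      cases hc : Function.partialInv ⇑f w' <;> simp [hpp, hc]
    rw [hfe, MI_ext hf]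
    exact hMI2


/-- the intersection over all `ε ∈ (0,1/4)` of the relaxed
regions `S_ε` equals the single-letter region `S^{r.c.s.}`. -/
theorem iInter_seps_eq_srcs
    {X Z Y : Type*} [Fintype X] [Fintype Z] [Fintype Y]
    (qXZ : X → Z → ℝ) (qXY : X → Y → ℝ)
    (hqXZ : IsPMF (fun s : X × Z => qXZ s.1 s.2))
    (hqXY : IsPMF (fun s : X × Y => qXY s.1 s.2)) :
    (⋂ ε ∈ Set.Ioo (0 : ℝ) (1 / 4), Seps qXZ qXY ε) = Srcs qXZ qXY := by
  classical
  have hXZne : Nonempty (X × Z) := by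
    by_contra hne
    rw [not_nonempty_iff] at hne
    have h2 := hqXZ.2
    rw [Finset.univ_eq_empty, Finset.sum_empty] at h2
    norm_num at h2
  have hXYne : Nonempty (X × Y) := by
    by_contra hne
    rw [not_nonempty_iff] at hne
    have h2 := hqXY.2
    rw [Finset.univ_eq_empty, Finset.sum_empty] at h2
    norm_num at h2
  have hX : Nonempty X := hXZne.elim fun s => ⟨s.1⟩
  have hZ : Nonempty Z := hXZne.elim fun s => ⟨s.2⟩
  have hY : Nonempty Y := hXYne.elim fun s => ⟨s.2⟩
  have h1X : (1 : ℝ) ≤ Fintype.card X := Nat.one_le_cast.mpr Fintype.card_pos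
  have h1Y : (1 : ℝ) ≤ Fintype.card Y := Nat.one_le_cast.mpr Fintype.card_pos
  ext RRc
  simp only [Set.mem_iInter]
  constructor
  · -- hard direction
    intro h
    have h8 : (1/8 : ℝ) ∈ Set.Ioo (0:ℝ) (1/4) := by norm_num
    have hR : 0 ≤ RRc.1 := (h (1/8) h8).1
    have hRc : 0 ≤ RRc.2 := (h (1/8) h8).2.1
    set N := Fintype.card Y * Fintype.card Z + 1 with hN
    set εs : ℕ → ℝ := fun n => ((n : ℝ) + 5)⁻¹ with hεs
    have hεmem : ∀ n, εs n ∈ Set.Ioo (0:ℝ) (1/4) := by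
      intro n
      constructor
      · positivity
      · rw [hεs]
        rw [show (1/4 : ℝ) = 4⁻¹ by norm_num]
        rw [inv_lt_inv₀ (by positivity) (by norm_num)]
        have hn : (0:ℝ) ≤ (n:ℝ) := Nat.cast_nonneg n
        linarith
    have hmem : ∀ n, ((RRc.1, RRc.2) : ℝ × ℝ) ∈ Seps qXZ qXY (εs n) := by
      intro n
      rw [Prod.mk.eta]
      exact h (εs n) (hεmem n)
    choose p kX kW kY hpmf hmarg hTV hkX hkW hkY heq hMI1 hMI2 using
      fun n => normalize qXZ qXY hY (hmem n)
    have hp0 : ∀ n x z w y, 0 ≤ p n x z w y := fun n x z w y => (hpmf n).1 (x, z, w, y)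
    have hp1 : ∀ n x z w y, p n x z w y ≤ 1 := fun n x z w y => pmf_le_one (hpmf n) (x, z, w, y)
    set c : ℕ → (X → Z → Fin N → Y → ℝ) × (Z → X → ℝ) × (Z → Fin N → ℝ) × (Fin N → Y → ℝ) :=
      fun n => (p n, kX n, kW n, kY n) with hcdef
    have hK : IsCompact (Set.Icc (0 : (X → Z → Fin N → Y → ℝ) × (Z → X → ℝ) ×
        (Z → Fin N → ℝ) × (Fin N → Y → ℝ)) 1) := isCompact_Icc
    have hcK : ∀ n, c n ∈ Set.Icc (0 : (X → Z → Fin N → Y → ℝ) × (Z → X → ℝ) ×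
        (Z → Fin N → ℝ) × (Fin N → Y → ℝ)) 1 := by
      intro n
      simp only [Set.mem_Icc, Prod.le_def, Pi.le_def, Pi.zero_apply, Pi.one_apply, hcdef]
      exact ⟨⟨fun x z w y => hp0 n x z w y, fun z x => (hkX n z).1 x,
        fun z w => (hkW n z).1 w, fun w y => (hkY n w).1 y⟩,
        ⟨fun x z w y => hp1 n x z w y, fun z x => pmf_le_one (hkX n z) x,
         fun z w => pmf_le_one (hkW n z) w, fun w y => pmf_le_one (hkY n w) y⟩⟩
    obtain ⟨cs, hcsK, φ, hφ, hlim⟩ := hK.tendsto_subseq hcK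
    have hφat : Tendsto φ atTop atTop := hφ.tendsto_atTop
    have hpl : ∀ x z w y, Tendsto (fun k => p (φ k) x z w y) atTop (nhds (cs.1 x z w y)) := by
      intro x z w y
      have hcont : Continuous fun d : (X → Z → Fin N → Y → ℝ) × (Z → X → ℝ) ×
          (Z → Fin N → ℝ) × (Fin N → Y → ℝ) => d.1 x z w y :=
        (continuous_apply y).comp ((continuous_apply w).comp ((continuous_apply z).comp
          ((continuous_apply x).comp continuous_fst)))
      exact (hcont.tendsto cs).comp hlim
    have hkXl : ∀ z x, Tendsto (fun k => kX (φ k) z x) atTop (nhds (cs.2.1 z x)) := by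
      intro z x
      have hcont : Continuous fun d : (X → Z → Fin N → Y → ℝ) × (Z → X → ℝ) ×
          (Z → Fin N → ℝ) × (Fin N → Y → ℝ) => d.2.1 z x :=
        (continuous_apply x).comp ((continuous_apply z).comp
          (continuous_fst.comp continuous_snd))
      exact (hcont.tendsto cs).comp hlim
    have hkWl : ∀ z w, Tendsto (fun k => kW (φ k) z w) atTop (nhds (cs.2.2.1 z w)) := by
      intro z w
      have hcont : Continuous fun d : (X → Z → Fin N → Y → ℝ) × (Z → X → ℝ) ×
          (Z → Fin N → ℝ) × (Fin N → Y → ℝ) => d.2.2.1 z w :=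
        (continuous_apply w).comp ((continuous_apply z).comp
          (continuous_fst.comp (continuous_snd.comp continuous_snd)))
      exact (hcont.tendsto cs).comp hlim
    have hkYl : ∀ w y, Tendsto (fun k => kY (φ k) w y) atTop (nhds (cs.2.2.2 w y)) := by
      intro w y
      have hcont : Continuous fun d : (X → Z → Fin N → Y → ℝ) × (Z → X → ℝ) ×
          (Z → Fin N → ℝ) × (Fin N → Y → ℝ) => d.2.2.2 w y :=
        (continuous_apply y).comp ((continuous_apply w).comp
          (continuous_snd.comp (continuous_snd.comp continuous_snd)))
      exact (hcont.tendsto cs).comp hlim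
    have hP0 : ∀ x z w y, 0 ≤ cs.1 x z w y :=
      fun x z w y => ge_of_tendsto' (hpl x z w y) (fun k => hp0 (φ k) x z w y)
    have hεlim : Tendsto εs atTop (nhds 0) := by
      have h1 : Tendsto (fun n : ℕ => (n : ℝ) + 5) atTop atTop :=
        tendsto_atTop_add_const_right _ 5 tendsto_natCast_atTop_atTop
      exact tendsto_inv_atTop_zero.comp h1
    have hεφ : Tendsto (fun k => εs (φ k)) atTop (nhds 0) := hεlim.comp hφat
    have hglim : Tendsto (fun n => g X Y (εs n)) atTop (nhds 0) := by
      have hcont : Continuous fun t : ℝ =>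
          4 * t * (Real.log (Fintype.card X) + Real.log (Fintype.card Y))
            - 4 * (t * Real.log t) :=
        ((continuous_const.mul continuous_id).mul continuous_const).sub
          (continuous_const.mul Real.continuous_mul_log)
      have hval : (fun n => g X Y (εs n)) = fun n =>
          4 * (εs n) * (Real.log (Fintype.card X) + Real.log (Fintype.card Y))
            - 4 * (εs n * Real.log (εs n)) := by
        funext n
        unfold g
        rw [one_div, Real.log_inv]
        ring
      rw [hval]
      have h0 := (hcont.tendsto 0).comp hεlim
      simpa [Function.comp_def] using h0
    have hgφ : Tendsto (fun k => g X Y (εs (φ k))) atTop (nhds 0) := hglim.comp hφat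
    refine ⟨hR, hRc, Fin N, inferInstance, by simp [hN], cs.1,
      ⟨fun s => hP0 s.1 s.2.1 s.2.2.1 s.2.2.2, ?_⟩, ?_, ?_,
      ⟨cs.2.1, cs.2.2.1, cs.2.2.2, ?_, ?_, ?_, ?_⟩, ?_, ?_⟩
    · -- total sum
      have ht : Tendsto (fun k => ∑ s : X × Z × Fin N × Y, p (φ k) s.1 s.2.1 s.2.2.1 s.2.2.2)
          atTop (nhds (∑ s : X × Z × Fin N × Y, cs.1 s.1 s.2.1 s.2.2.1 s.2.2.2)) :=
        tendsto_finset_sum _ (fun s _ => hpl s.1 s.2.1 s.2.2.1 s.2.2.2)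
      have he : (fun k => ∑ s : X × Z × Fin N × Y, p (φ k) s.1 s.2.1 s.2.2.1 s.2.2.2)
          = fun _ => (1:ℝ) := funext fun k => (hpmf (φ k)).2
      rw [he] at ht
      exact tendsto_nhds_unique ht tendsto_const_nhds
    · -- XZ marginal
      intro x z
      have ht : Tendsto (fun k => ∑ w, ∑ y, p (φ k) x z w y)
          atTop (nhds (∑ w, ∑ y, cs.1 x z w y)) :=
        tendsto_finset_sum _ fun w _ => tendsto_finset_sum _ fun y _ => hpl x z w y
      have he : (fun k => ∑ w, ∑ y, p (φ k) x z w y) = fun _ => qXZ x z :=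
        funext fun k => hmarg (φ k) x z
      rw [he] at ht
      exact tendsto_nhds_unique ht tendsto_const_nhds
    · -- XY marginal
      have hTVl : Tendsto (fun k => TV (fun xy : X × Y => ∑ z, ∑ w, p (φ k) xy.1 z w xy.2)
          (fun xy : X × Y => qXY xy.1 xy.2)) atTop
          (nhds (TV (fun xy : X × Y => ∑ z, ∑ w, cs.1 xy.1 z w xy.2)
            (fun xy : X × Y => qXY xy.1 xy.2))) := by
        unfold TV
        refine Tendsto.const_mul _ (tendsto_finset_sum _ fun s _ => ?_)
        exact ((tendsto_finset_sum _ fun z _ => tendsto_finset_sum _ fun w _ =>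
          hpl s.1 z w s.2).sub tendsto_const_nhds).abs
      have hTVle : TV (fun xy : X × Y => ∑ z, ∑ w, cs.1 xy.1 z w xy.2)
          (fun xy : X × Y => qXY xy.1 xy.2) ≤ 0 :=
        le_of_tendsto_of_tendsto' hTVl hεφ (fun k => hTV (φ k))
      have hnn : 0 ≤ ∑ s : X × Y, |(∑ z, ∑ w, cs.1 s.1 z w s.2) - qXY s.1 s.2| :=
        Finset.sum_nonneg fun s _ => abs_nonneg _
      have hsum0 : ∑ s : X × Y, |(∑ z, ∑ w, cs.1 s.1 z w s.2) - qXY s.1 s.2| = 0 := by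
        unfold TV at hTVle
        simp only at hTVle
        linarith
      intro x y
      have h3 := (Finset.sum_eq_zero_iff_of_nonneg (fun s _ => abs_nonneg _)).1 hsum0 (x, y)
        (Finset.mem_univ _)
      have h4 := abs_eq_zero.1 h3
      linarith [h4]
    · -- kX kernel
      intro z
      refine ⟨fun x => ge_of_tendsto' (hkXl z x) (fun k => (hkX (φ k) z).1 x), ?_⟩
      have ht : Tendsto (fun k => ∑ x, kX (φ k) z x) atTop (nhds (∑ x, cs.2.1 z x)) :=
        tendsto_finset_sum _ fun x _ => hkXl z x
      have he : (fun k => ∑ x, kX (φ k) z x) = fun _ => (1:ℝ) :=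
        funext fun k => (hkX (φ k) z).2
      rw [he] at ht
      exact tendsto_nhds_unique ht tendsto_const_nhds
    · -- kW kernel
      intro z
      refine ⟨fun w => ge_of_tendsto' (hkWl z w) (fun k => (hkW (φ k) z).1 w), ?_⟩
      have ht : Tendsto (fun k => ∑ w, kW (φ k) z w) atTop (nhds (∑ w, cs.2.2.1 z w)) :=
        tendsto_finset_sum _ fun w _ => hkWl z w
      have he : (fun k => ∑ w, kW (φ k) z w) = fun _ => (1:ℝ) :=
        funext fun k => (hkW (φ k) z).2
      rw [he] at ht
      exact tendsto_nhds_unique ht tendsto_const_nhds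
    · -- kY kernel
      intro w
      refine ⟨fun y => ge_of_tendsto' (hkYl w y) (fun k => (hkY (φ k) w).1 y), ?_⟩
      have ht : Tendsto (fun k => ∑ y, kY (φ k) w y) atTop (nhds (∑ y, cs.2.2.2 w y)) :=
        tendsto_finset_sum _ fun y _ => hkYl w y
      have he : (fun k => ∑ y, kY (φ k) w y) = fun _ => (1:ℝ) :=
        funext fun k => (hkY (φ k) w).2
      rw [he] at ht
      exact tendsto_nhds_unique ht tendsto_const_nhds
    · -- Markov equation
      intro x z w y
      have hm : Tendsto (fun k => ∑ x', ∑ w', ∑ y', p (φ k) x' z w' y') atTop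
          (nhds (∑ x', ∑ w', ∑ y', cs.1 x' z w' y')) :=
        tendsto_finset_sum _ fun x' _ => tendsto_finset_sum _ fun w' _ =>
          tendsto_finset_sum _ fun y' _ => hpl x' z w' y'
      have hrhs := ((hm.mul (hkXl z x)).mul (hkWl z w)).mul (hkYl w y)
      have hlhs : (fun k => p (φ k) x z w y) = fun k =>
          (∑ x', ∑ w', ∑ y', p (φ k) x' z w' y') * kX (φ k) z x * kW (φ k) z w
            * kY (φ k) w y :=
        funext fun k => heq (φ k) x z w y
      refine tendsto_nhds_unique (hpl x z w y) ?_
      rw [hlhs]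
      exact hrhs
    · -- MI 1
      have hMt : Tendsto (fun k => MI (fun z w => ∑ x, ∑ y, p (φ k) x z w y)) atTop
          (nhds (MI (fun z w => ∑ x, ∑ y, cs.1 x z w y))) := by
        apply MI_tendsto
        · intro z w
          exact tendsto_finset_sum _ fun x _ => tendsto_finset_sum _ fun y _ => hpl x z w y
        · intro k z w
          exact Finset.sum_nonneg fun x _ => Finset.sum_nonneg fun y _ => hp0 (φ k) x z w y
      exact le_of_tendsto hMt (Filter.Eventually.of_forall fun k => hMI1 (φ k))
    · -- MI 2
      have hMt : Tendsto (fun k => MI (fun (xy : X × Y) w => ∑ z, p (φ k) xy.1 z w xy.2)) atTop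
          (nhds (MI (fun (xy : X × Y) w => ∑ z, cs.1 xy.1 z w xy.2))) := by
        apply MI_tendsto
        · intro xy w
          exact tendsto_finset_sum _ fun z _ => hpl xy.1 z w xy.2
        · intro k xy w
          exact Finset.sum_nonneg fun z _ => hp0 (φ k) xy.1 z w xy.2
      have hrhs : Tendsto (fun k => RRc.1 + RRc.2 + 2 * g X Y (εs (φ k))) atTop
          (nhds (RRc.1 + RRc.2)) := by
        have h2 : Tendsto (fun k => RRc.1 + RRc.2 + 2 * g X Y (εs (φ k))) atTop
            (nhds (RRc.1 + RRc.2 + 2 * 0)) := tendsto_const_nhds.add (hgφ.const_mul 2)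
        simpa using h2
      refine le_of_tendsto_of_tendsto' hMt hrhs (fun k => ?_)
      have := hMI2 (φ k)
      linarith
  · -- easy direction
    intro h ε hε
    obtain ⟨hR, hRc, W, instW, hcard, p, hpmf, hmargXZ, hmargXY, hMarkov, hMI1, hMI2⟩ := h
    have hg0 : 0 ≤ g X Y ε := by
      have hlog1 : 0 ≤ Real.log (Fintype.card X) := Real.log_nonneg h1X
      have hlog2 : 0 ≤ Real.log (Fintype.card Y) := Real.log_nonneg h1Y
      have hlog3 : 0 ≤ Real.log (1 / ε) :=
        Real.log_nonneg (one_le_one_div hε.1 (by linarith [hε.2]))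
      unfold g
      have := hε.1
      positivity
    refine ⟨hR, hRc, W, instW, hcard, p, hpmf, hmargXZ, ?_, hMarkov, hMI1, by linarith⟩
    have hTV0 : TV (fun xy : X × Y => ∑ z, ∑ w, p xy.1 z w xy.2)
        (fun xy : X × Y => qXY xy.1 xy.2) = 0 := by
      unfold TV
      rw [Finset.sum_eq_zero fun s _ => by simp [hmargXY s.1 s.2], mul_zero]
    rw [hTV0]
    exact hε.1.le

end RCS
end

section
/- For every distribution q_{X,Z,Y} compatible with (q_{X,Z}, q_{X,Y}), the direct-channel-synthesis region S^{d.c.s.}(q_{X,Z,Y}) is contained in the remote-channel-synthesis region S^{r.c.s.}. -/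
open scoped BigOperators
open Filter

namespace RCS

/-- A distribution `q` on `𝒳×𝒵×𝒴` is compatible with `(q_{X,Z}, q_{X,Y})`:
its `(X,Z)`-marginal is `q_{X,Z}`, its `(X,Y)`-marginal is `q_{X,Y}`, and it
satisfies the Markov chain `X − Z − Y`, i.e.
`q(x,z,y) = q_Z(z)·q_{X|Z}(x|z)·q_{Y|Z}(y|z)` for some kernels. -/
def Compatible {X Z Y : Type*} [Fintype X] [Fintype Z] [Fintype Y]
    (qXZ : X → Z → ℝ) (qXY : X → Y → ℝ) (q : X → Z → Y → ℝ) : Prop :=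
  (∀ x z, (∑ y, q x z y) = qXZ x z) ∧
  (∀ x y, (∑ z, q x z y) = qXY x y) ∧
  ∃ (kX : Z → X → ℝ) (kY : Z → Y → ℝ),
    IsKernel kX ∧ IsKernel kY ∧
    ∀ x z y, q x z y = (∑ x', ∑ y', q x' z y') * kX z x * kY z y

/-- The direct-channel-synthesis region `S^{d.c.s.}(q_{X,Z,Y})`. -/
def Sdcs {X Z Y : Type*} [Fintype X] [Fintype Z] [Fintype Y]
    (q : X → Z → Y → ℝ) : Set (ℝ × ℝ) :=
  { RRc | 0 ≤ RRc.1 ∧ 0 ≤ RRc.2 ∧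
    ∃ (W : Type) (hW : Fintype W),
      letI := hW
      Fintype.card W ≤ Fintype.card Y * Fintype.card Z + 1 ∧
      ∃ p : X → Z → W → Y → ℝ,
        IsPMF (fun s : X × Z × W × Y => p s.1 s.2.1 s.2.2.1 s.2.2.2) ∧
        (∀ x z y, (∑ w, p x z w y) = q x z y) ∧
        MarkovXZWY p ∧
        MI (fun z w => ∑ x, ∑ y, p x z w y) ≤ RRc.1 ∧
        MI (fun (zy : Z × Y) w => ∑ x, p x zy.1 w zy.2) ≤ RRc.1 + RRc.2 }

/-- Log-sum inequality. -/
lemma log_sum_ineq {ι : Type*} [Fintype ι] (x y : ι → ℝ)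
    (hx : ∀ i, 0 ≤ x i) (hy : ∀ i, 0 ≤ y i) (hxy : ∀ i, y i = 0 → x i = 0) :
    (∑ i, x i) * Real.log ((∑ i, x i) / (∑ i, y i)) ≤ ∑ i, x i * Real.log (x i / y i) := by
  by_cases hS : ∑ i, x i = 0
  · have hx0 : ∀ i, x i = 0 := by
      intro i
      have := Finset.single_le_sum (fun j _ => hx j) (Finset.mem_univ i)
      linarith [hx i, this.trans_eq hS]
    simp [hx0, hS]
  · have hSpos : 0 < ∑ i, x i :=
      lt_of_le_of_ne (Finset.sum_nonneg fun i _ => hx i) (Ne.symm hS)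
    obtain ⟨i0, hi0⟩ : ∃ i, x i ≠ 0 := by
      by_contra h; push_neg at h; exact hS (by simp [h])
    have hyi0 : 0 < y i0 :=
      lt_of_le_of_ne (hy i0) (fun h => hi0 (hxy i0 h.symm))
    have hTpos : 0 < ∑ i, y i :=
      lt_of_lt_of_le hyi0 (Finset.single_le_sum (fun j _ => hy j) (Finset.mem_univ i0))
    set S := ∑ i, x i with hSdef
    set T := ∑ i, y i with hTdef
    have key : ∀ i, x i * Real.log (S / T) + x i - y i * (S / T) ≤ x i * Real.log (x i / y i) := by
      intro i
      by_cases hxi : x i = 0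
      · have : 0 ≤ y i * (S / T) := mul_nonneg (hy i) (by positivity)
        simp [hxi]; linarith
      · have hxi' : 0 < x i := lt_of_le_of_ne (hx i) (Ne.symm hxi)
        have hyi : 0 < y i := lt_of_le_of_ne (hy i) (fun h => hxi (hxy i h.symm))
        have h1 : Real.log ((S / T) * (y i / x i)) ≤ (S / T) * (y i / x i) - 1 :=
          Real.log_le_sub_one_of_pos (by positivity)
        have h2 : Real.log ((S / T) * (y i / x i)) =
            Real.log (S / T) - Real.log (x i / y i) := by
          rw [Real.log_mul (by positivity) (by positivity),
            Real.log_div hSpos.ne' hTpos.ne', Real.log_div hyi.ne' hxi'.ne',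
            Real.log_div hxi'.ne' hyi.ne']
          ring
        rw [h2] at h1
        have h3 := mul_le_mul_of_nonneg_left h1 hxi'.le
        have h4 : x i * ((S / T) * (y i / x i)) = y i * (S / T) := by
          field_simp
        nlinarith [h3, h4]
    have hsum : ∑ i, (x i * Real.log (S / T) + x i - y i * (S / T)) ≤
        ∑ i, x i * Real.log (x i / y i) :=
      Finset.sum_le_sum (fun i _ => key i)
    have hexp : ∑ i, (x i * Real.log (S / T) + x i - y i * (S / T)) =
        S * Real.log (S / T) + S - T * (S / T) := by
      rw [Finset.sum_sub_distrib, Finset.sum_add_distrib, ← Finset.sum_mul, ← Finset.sum_mul]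
    have hTS : T * (S / T) = S := by field_simp
    rw [hexp, hTS] at hsum
    linarith

/-- Data processing: if the joint on `A × C` is obtained from `ν` on `B × C`
by a kernel `k : B → A`, then `I(A;C) ≤ I(B;C)`. -/
lemma dpi {A B C : Type*} [Fintype A] [Fintype B] [Fintype C]
    (k : B → A → ℝ) (ν : B → C → ℝ) (hk : IsKernel k) (hν : ∀ b c, 0 ≤ ν b c) :
    MI (fun a c => ∑ b, k b a * ν b c) ≤ MI ν := by
  set f : A → C → ℝ := fun a c => ∑ b, k b a * ν b c with hf
  have hknn : ∀ b a, 0 ≤ k b a := fun b a => (hk b).1 a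
  have hk1 : ∀ b, ∑ a, k b a = 1 := fun b => (hk b).2
  set νB : B → ℝ := fun b => ∑ c, ν b c with hνB
  set fC : C → ℝ := fun c => ∑ b, ν b c with hfC
  have hfA : ∀ a, (∑ c, f a c) = ∑ b, k b a * νB b := by
    intro a
    rw [Finset.sum_comm]
    exact Finset.sum_congr rfl fun b _ => by rw [← Finset.mul_sum]
  have hfCeq : ∀ c, (∑ a, f a c) = fC c := by
    intro c
    rw [Finset.sum_comm]
    refine Finset.sum_congr rfl fun b _ => ?_
    rw [← Finset.sum_mul, hk1 b, one_mul]
  have hνBnn : ∀ b, 0 ≤ νB b := fun b => Finset.sum_nonneg fun c _ => hν b c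
  have hfCnn : ∀ c, 0 ≤ fC c := fun c => Finset.sum_nonneg fun b _ => hν b c
  have key : ∀ a c, f a c * Real.log (f a c / ((∑ c', f a c') * (∑ a', f a' c))) ≤
      ∑ b, k b a * (ν b c * Real.log (ν b c / (νB b * fC c))) := by
    intro a c
    have hls := log_sum_ineq (fun b => k b a * ν b c)
      (fun b => k b a * (νB b * fC c))
      (fun b => mul_nonneg (hknn b a) (hν b c))
      (fun b => mul_nonneg (hknn b a) (mul_nonneg (hνBnn b) (hfCnn c)))
      (by
        intro b hb
        show k b a * ν b c = 0
        have hb' : k b a * (νB b * fC c) = 0 := hb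
        rcases mul_eq_zero.mp hb' with h | h
        · rw [h, zero_mul]
        rcases mul_eq_zero.mp h with h | h
        · have h1 : ν b c ≤ νB b := Finset.single_le_sum (fun c' _ => hν b c') (Finset.mem_univ c)
          have : ν b c = 0 := le_antisymm (h ▸ h1) (hν b c)
          rw [this, mul_zero]
        · have h1 : ν b c ≤ fC c := Finset.single_le_sum (fun b' _ => hν b' c) (Finset.mem_univ b)
          have : ν b c = 0 := le_antisymm (h ▸ h1) (hν b c)
          rw [this, mul_zero])
    have hsy : ∑ b, k b a * (νB b * fC c) = (∑ c', f a c') * (∑ a', f a' c) := by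
      rw [hfA a, hfCeq c, Finset.sum_mul]
      exact Finset.sum_congr rfl fun b _ => by ring
    have hsx : ∑ b, k b a * ν b c = f a c := rfl
    rw [hsx, hsy] at hls
    refine hls.trans_eq (Finset.sum_congr rfl fun b _ => ?_)
    by_cases hkb : k b a = 0
    · simp [hkb]
    · have : k b a * ν b c / (k b a * (νB b * fC c)) = ν b c / (νB b * fC c) :=
        mul_div_mul_left _ _ hkb
      rw [this]; ring
  calc MI f ≤ ∑ a, ∑ c, ∑ b, k b a * (ν b c * Real.log (ν b c / (νB b * fC c))) := by
        refine Finset.sum_le_sum fun a _ => Finset.sum_le_sum fun c _ => ?_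
        exact key a c
    _ = ∑ c, ∑ a, ∑ b, k b a * (ν b c * Real.log (ν b c / (νB b * fC c))) :=
        Finset.sum_comm
    _ = ∑ c, ∑ b, ∑ a, k b a * (ν b c * Real.log (ν b c / (νB b * fC c))) :=
        Finset.sum_congr rfl fun c _ => Finset.sum_comm
    _ = ∑ c, ∑ b, ν b c * Real.log (ν b c / (νB b * fC c)) :=
        Finset.sum_congr rfl fun c _ => Finset.sum_congr rfl fun b _ => by
          rw [← Finset.sum_mul, hk1 b, one_mul]
    _ = ∑ b, ∑ c, ν b c * Real.log (ν b c / (νB b * fC c)) := Finset.sum_comm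
    _ = MI ν := rfl

/-- Under the Markov chain `X − Z − W − Y`, `I(X,Y;W) ≤ I(Z,Y;W)`. -/
lemma mi_xy_le_mi_zy {X Z W Y : Type*} [Fintype X] [Fintype Z] [Fintype W] [Fintype Y]
    (p : X → Z → W → Y → ℝ) (hpnn : ∀ x z w y, 0 ≤ p x z w y)
    (hmk : MarkovXZWY p) :
    MI (fun (xy : X × Y) w => ∑ z, p xy.1 z w xy.2) ≤
      MI (fun (zy : Z × Y) w => ∑ x, p x zy.1 w zy.2) := by
  classical
  obtain ⟨kX, kW, kY, hkX, hkW, hkY, heq⟩ := hmk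
  set k : Z × Y → X × Y → ℝ := fun zy xy => if xy.2 = zy.2 then kX zy.1 xy.1 else 0 with hkdef
  set ν : Z × Y → W → ℝ := fun zy w => ∑ x, p x zy.1 w zy.2 with hνdef
  have hkker : IsKernel k := by
    intro zy
    constructor
    · intro xy
      show 0 ≤ if xy.2 = zy.2 then kX zy.1 xy.1 else 0
      split
      · exact (hkX zy.1).1 xy.1
      · exact le_refl 0
    · show (∑ xy : X × Y, if xy.2 = zy.2 then kX zy.1 xy.1 else 0) = 1
      rw [Fintype.sum_prod_type]
      rw [← (hkX zy.1).2]
      refine Finset.sum_congr rfl fun x _ => ?_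
      simp
  have hνnn : ∀ zy w, 0 ≤ ν zy w := fun zy w => Finset.sum_nonneg fun x _ => hpnn _ _ _ _
  have hfun : (fun (xy : X × Y) w => ∑ z, p xy.1 z w xy.2) =
      fun xy w => ∑ zy : Z × Y, k zy xy * ν zy w := by
    funext xy w
    rw [Fintype.sum_prod_type]
    refine Finset.sum_congr rfl fun z _ => ?_
    have hin : ∀ y', k (z, y') xy * ν (z, y') w =
        if y' = xy.2 then kX z xy.1 * ν (z, xy.2) w else 0 := by
      intro y'
      show (if xy.2 = y' then kX z xy.1 else 0) * ν (z, y') w = _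
      by_cases h : y' = xy.2
      · subst h; simp
      · rw [if_neg (fun h' => h h'.symm), zero_mul, if_neg h]
    rw [Finset.sum_congr rfl fun y' _ => hin y', Finset.sum_ite_eq' Finset.univ xy.2]
    simp only [Finset.mem_univ, if_true]
    have hsum : ν (z, xy.2) w =
        (∑ x', ∑ w', ∑ y', p x' z w' y') * kW z w * kY w xy.2 := by
      show (∑ x, p x z w xy.2) = _
      calc (∑ x, p x z w xy.2)
          = ∑ x, kX z x * ((∑ x', ∑ w', ∑ y', p x' z w' y') * kW z w * kY w xy.2) := by
            refine Finset.sum_congr rfl fun x _ => ?_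
            rw [heq x z w xy.2]; ring
        _ = (∑ x, kX z x) * ((∑ x', ∑ w', ∑ y', p x' z w' y') * kW z w * kY w xy.2) :=
            (Finset.sum_mul _ _ _).symm
        _ = _ := by rw [(hkX z).2, one_mul]
    rw [hsum, heq xy.1 z w xy.2]; ring
  rw [hfun]
  exact dpi k ν hkker hνnn

/-- for every distribution `q_{X,Z,Y}` compatible with
`(q_{X,Z}, q_{X,Y})`, the direct-channel-synthesis region `S^{d.c.s.}(q_{X,Z,Y})`
is contained in the remote-channel-synthesis region `S^{r.c.s.}`. -/
theorem sdcs_subset_srcs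
    {X Z Y : Type*} [Fintype X] [Fintype Z] [Fintype Y]
    (qXZ : X → Z → ℝ) (qXY : X → Y → ℝ)
    (hqXZ : IsPMF (fun s : X × Z => qXZ s.1 s.2))
    (hqXY : IsPMF (fun s : X × Y => qXY s.1 s.2))
    (q : X → Z → Y → ℝ)
    (hq : IsPMF (fun s : X × Z × Y => q s.1 s.2.1 s.2.2))
    (hcompat : Compatible qXZ qXY q) :
    Sdcs q ⊆ Srcs qXZ qXY := by
  intro RRc hmem
  obtain ⟨hR, hRc, W, hW, hcard, p, hpmf, hmarg, hmk, hMI1, hMI2⟩ := hmem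
  obtain ⟨hqXZm, hqXYm, -⟩ := hcompat
  letI := hW
  have hpnn : ∀ x z w y, 0 ≤ p x z w y := fun x z w y => hpmf.1 ⟨x, z, w, y⟩
  refine ⟨hR, hRc, W, hW, hcard, p, hpmf, ?_, ?_, hmk, hMI1, ?_⟩
  · intro x z
    rw [Finset.sum_comm, ← hqXZm x z]
    exact Finset.sum_congr rfl fun y _ => hmarg x z y
  · intro x y
    rw [← hqXYm x y]
    exact Finset.sum_congr rfl fun z _ => hmarg x z y
  · exact (mi_xy_le_mi_zy p hpnn hmk).trans hMI2


end RCS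
end

section
/- Strict sub-optimality of direct channel synthesis at low common randomness rates: assume 𝒳 = 𝒵 = 𝒴 = {0,1}, that q_X, q_Z and q_Y are all Bernoulli(1/2), that 0 < q_{X,Z}(X ≠ Z) < q_{X,Y}(X ≠ Y) < 1/2, and that there exists a distribution compatible with (q_{X,Z}, q_{X,Y}). Then there exists r > 0 such that for every R_c ∈ [0, r): min{ R : (R,R_c) ∈ ∪_{q_{X,Z,Y}} S^{d.c.s.}(q_{X,Z,Y}) } > min{ R : (R,R_c) ∈ S^{r.c.s.} }, where the union is over all distributions q_{X,Z,Y} on 𝒳×𝒵×𝒴 compatible with (q_{X,Z}, q_{X,Y}). -/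
open scoped BigOperators
open Filter

namespace RCS

noncomputable def Lf (u : ℝ) : ℝ := Real.log (1 + u) - Real.log (1 - u)

lemma Lf_hasDeriv {u : ℝ} (h1 : -1 < u) (h2 : u < 1) :
    HasDerivAt Lf (1/(1+u) + 1/(1-u)) u := by
  have h1' : (1:ℝ) + u ≠ 0 := by linarith
  have h2' : (1:ℝ) - u ≠ 0 := by linarith
  have ha : HasDerivAt (fun u : ℝ => Real.log (1 + u)) (1/(1+u)) u := by
    have := (Real.hasDerivAt_log h1').comp u ((hasDerivAt_id u).const_add 1)
    exact this.congr_deriv (by simp)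
  have hb : HasDerivAt (fun u : ℝ => Real.log (1 - u)) (-(1/(1-u))) u := by
    have hinner : HasDerivAt (fun u : ℝ => 1 - u) (-1) u := by
      simpa using ((hasDerivAt_id u).const_sub 1)
    have := (Real.hasDerivAt_log h2').comp u hinner
    exact this.congr_deriv (by ring)
  exact (ha.sub hb).congr_deriv (by ring)

lemma Lf_zero : Lf 0 = 0 := by simp [Lf]

lemma Lf_strictConvexOn : StrictConvexOn ℝ (Set.Ico (0:ℝ) 1) Lf := by
  apply StrictMonoOn.strictConvexOn_of_deriv (convex_Ico 0 1)
  · apply ContinuousOn.sub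
    · apply Real.continuousOn_log.comp (by fun_prop)
      intro x hx
      simp only [Set.mem_Ico] at hx
      simp only [Set.mem_compl_iff, Set.mem_singleton_iff]
      intro h; linarith [hx.1]
    · apply Real.continuousOn_log.comp (by fun_prop)
      intro x hx
      simp only [Set.mem_Ico] at hx
      simp only [Set.mem_compl_iff, Set.mem_singleton_iff]
      intro h; linarith [hx.2]
  · rw [interior_Ico]
    intro x hx y hy hxy
    rw [(Lf_hasDeriv (by linarith [hx.1]) hx.2).deriv,
        (Lf_hasDeriv (by linarith [hy.1]) hy.2).deriv]
    have hx1 : (0:ℝ) < 1 + x := by linarith [hx.1]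
    have hx2 : (0:ℝ) < 1 - x := by linarith [hx.2]
    have hy1 : (0:ℝ) < 1 + y := by linarith [hy.1]
    have hy2 : (0:ℝ) < 1 - y := by linarith [hy.2]
    rw [div_add_div _ _ (ne_of_gt hx1) (ne_of_gt hx2),
        div_add_div _ _ (ne_of_gt hy1) (ne_of_gt hy2)]
    rw [div_lt_div_iff₀ (by positivity) (by positivity)]
    have h0x : 0 ≤ x := hx.1.le
    nlinarith [hx.1, hy.2, mul_pos hx1 hx2, mul_pos hy1 hy2]

lemma Lf_slope_lt {u s : ℝ} (h0 : 0 < u) (hus : u < s) (hs : s < 1) :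
    Lf u * s < Lf s * u := by
  have hs0 : 0 < s := h0.trans hus
  have hds : u/s < 1 := (div_lt_one hs0).2 hus
  have := Lf_strictConvexOn.2 (Set.mem_Ico.2 ⟨le_refl (0:ℝ), by linarith⟩)
    (Set.mem_Ico.2 ⟨hs0.le, hs⟩) (by exact ne_of_lt (by linarith))
    (show (0:ℝ) < 1 - u/s by linarith) (show (0:ℝ) < u/s by positivity)
    (show (1 - u/s) + u/s = 1 by ring)
  simp only [smul_eq_mul, mul_zero, Lf_zero, zero_add] at this
  rw [div_mul_cancel₀ _ (ne_of_gt hs0)] at this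
  calc Lf u * s < (u/s * Lf s) * s := by
        have := mul_lt_mul_of_pos_right this hs0
        linarith
    _ = Lf s * u := by field_simp

lemma Lf_slope_gt {u s : ℝ} (h0 : 0 < s) (hus : s < u) (hu : u < 1) :
    Lf s * u < Lf u * s := by
  have hu0 : 0 < u := h0.trans hus
  have hds : s/u < 1 := (div_lt_one hu0).2 hus
  have := Lf_strictConvexOn.2 (Set.mem_Ico.2 ⟨le_refl (0:ℝ), by linarith⟩)
    (Set.mem_Ico.2 ⟨hu0.le, hu⟩) (by exact ne_of_lt (by linarith))
    (show (0:ℝ) < 1 - s/u by linarith) (show (0:ℝ) < s/u by positivity)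
    (show (1 - s/u) + s/u = 1 by ring)
  simp only [smul_eq_mul, mul_zero, Lf_zero, zero_add] at this
  rw [div_mul_cancel₀ _ (ne_of_gt hu0)] at this
  calc Lf s * u < (s/u * Lf u) * u := by
        have := mul_lt_mul_of_pos_right this hu0
        linarith
    _ = Lf u * s := by field_simp


noncomputable def psiF (K u : ℝ) : ℝ := Real.binEntropy ((1-u)/2) + K*u^2/4

lemma psi_hasDeriv (K : ℝ) {u : ℝ} (h1 : -1 < u) (h2 : u < 1) :
    HasDerivAt (psiF K) ((K*u - Lf u)/2) u := by
  have hp0 : (1-u)/2 ≠ 0 := by intro h; nlinarith [h]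
  have hp1 : (1-u)/2 ≠ 1 := by intro h; nlinarith [h]
  have hinner : HasDerivAt (fun u : ℝ => (1-u)/2) (-(1/2)) u := by
    have : HasDerivAt (fun u : ℝ => 1 - u) (-1) u := by
      simpa using ((hasDerivAt_id u).const_sub 1)
    exact (this.div_const 2).congr_deriv (by ring)
  have hcomp := (Real.hasDerivAt_binEntropy hp0 hp1).comp u hinner
  have hquad : HasDerivAt (fun u : ℝ => K*u^2/4) (K*u/2) u := by
    have := ((hasDerivAt_pow 2 u).const_mul K).div_const 4
    exact this.congr_deriv (by norm_num; ring)
  have hsum := hcomp.add hquad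
  have heq : (Real.log (1 - (1-u)/2) - Real.log ((1-u)/2)) * -(1/2) + K*u/2
      = (K*u - Lf u)/2 := by
    have e1 : 1 - (1-u)/2 = (1+u)/2 := by ring
    rw [e1, Real.log_div (by linarith) (by norm_num),
        Real.log_div (by linarith) (by norm_num), Lf]
    ring
  rw [heq] at hsum
  exact hsum

lemma psi_continuous (K : ℝ) : Continuous (psiF K) := by
  unfold psiF
  exact (Real.binEntropy_continuous.comp (by fun_prop)).add (by fun_prop)

lemma psi_even (K u : ℝ) : psiF K (-u) = psiF K u := by
  unfold psiF
  have e1 : (1-(-u))/2 = 1 - (1-u)/2 := by ring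
  rw [e1, Real.binEntropy_one_sub]
  ring_nf

lemma psi_max {γ : ℝ} (hγ0 : 0 < γ) (hγ1 : γ < 1/2) {u : ℝ}
    (hu : u ∈ Set.Icc (-1:ℝ) 1) :
    psiF (Lf (1-2*γ) / (1-2*γ)) u ≤ psiF (Lf (1-2*γ) / (1-2*γ)) (1-2*γ) := by
  set s : ℝ := 1 - 2*γ with hs
  have hs0 : 0 < s := by simp only [hs]; linarith
  have hs1 : s < 1 := by simp only [hs]; linarith
  set K : ℝ := Lf s / s with hK
  have hmono : MonotoneOn (psiF K) (Set.Icc 0 s) := by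
    apply monotoneOn_of_deriv_nonneg (convex_Icc 0 s) (psi_continuous K).continuousOn
    · intro x hx
      rw [interior_Icc] at hx
      exact (psi_hasDeriv K (by linarith [hx.1]) (by linarith [hx.2, hs1])).differentiableAt.differentiableWithinAt
    · intro x hx
      rw [interior_Icc] at hx
      rw [(psi_hasDeriv K (by linarith [hx.1]) (by linarith [hx.2, hs1])).deriv]
      have hsl := Lf_slope_lt hx.1 hx.2 hs1
      have : Lf x ≤ K * x := by
        rw [hK]
        rw [div_mul_eq_mul_div, le_div_iff₀ hs0]
        nlinarith
      linarith
  have hanti : AntitoneOn (psiF K) (Set.Icc s 1) := by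
    apply antitoneOn_of_deriv_nonpos (convex_Icc s 1) (psi_continuous K).continuousOn
    · intro x hx
      rw [interior_Icc] at hx
      exact (psi_hasDeriv K (by linarith [hx.1]) (by linarith [hx.2])).differentiableAt.differentiableWithinAt
    · intro x hx
      rw [interior_Icc] at hx
      rw [(psi_hasDeriv K (by linarith [hx.1]) (by linarith [hx.2])).deriv]
      have hsl := Lf_slope_gt hs0 hx.1 hx.2
      have : K * x ≤ Lf x := by
        rw [hK]
        rw [div_mul_eq_mul_div, div_le_iff₀ hs0]
        nlinarith
      linarith
  have key : ∀ v : ℝ, 0 ≤ v → v ≤ 1 → psiF K v ≤ psiF K s := by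
    intro v hv0 hv1
    rcases le_or_gt v s with h | h
    · exact hmono (Set.mem_Icc.2 ⟨hv0, h⟩) (Set.mem_Icc.2 ⟨hs0.le, le_refl s⟩) h
    · exact hanti (Set.mem_Icc.2 ⟨le_refl s, hs1.le⟩) (Set.mem_Icc.2 ⟨h.le.trans (le_refl v), hv1⟩) h.le
  rcases le_or_gt 0 u with h | h
  · exact key u h hu.2
  · rw [← psi_even K u]
    exact key (-u) (by linarith) (by linarith [hu.1])

lemma K_pos {γ : ℝ} (hγ0 : 0 < γ) (hγ1 : γ < 1/2) : 0 < Lf (1-2*γ) / (1-2*γ) := by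
  have hs0 : (0:ℝ) < 1-2*γ := by linarith
  have hs1 : 1-2*γ < 1 := by linarith
  apply div_pos _ hs0
  unfold Lf
  have h1 : 0 < Real.log (1 + (1-2*γ)) := Real.log_pos (by linarith)
  have h2 : Real.log (1 - (1-2*γ)) < 0 := Real.log_neg (by linarith) (by linarith)
  linarith

lemma lemmaA {γ z y : ℝ} (hγ0 : 0 < γ) (hγ1 : γ < 1/2)
    (hz0 : 0 ≤ z) (hz1 : z ≤ 1) (hy0 : 0 ≤ y) (hy1 : y ≤ 1) :
    Real.binEntropy z + Real.binEntropy y ≤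
      2 * Real.binEntropy γ +
        (Lf (1-2*γ) / (1-2*γ)) * (z + y - 2*z*y - 2*γ*(1-γ)) := by
  set K : ℝ := Lf (1-2*γ) / (1-2*γ) with hKdef
  have hK : 0 < K := K_pos hγ0 hγ1
  set u : ℝ := 1 - 2*z with hu
  set v : ℝ := 1 - 2*y with hv
  have hu1 : u ∈ Set.Icc (-1:ℝ) 1 := Set.mem_Icc.2 ⟨by simp only [hu]; linarith, by simp only [hu]; linarith⟩
  have hv1 : v ∈ Set.Icc (-1:ℝ) 1 := Set.mem_Icc.2 ⟨by simp only [hv]; linarith, by simp only [hv]; linarith⟩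
  have h1 := psi_max hγ0 hγ1 hu1
  have h2 := psi_max hγ0 hγ1 hv1
  rw [← hKdef] at h1 h2
  have ez : (1-u)/2 = z := by simp only [hu]; ring
  have ey : (1-v)/2 = y := by simp only [hv]; ring
  have eγ : (1-(1-2*γ))/2 = γ := by ring
  unfold psiF at h1 h2
  rw [ez, eγ] at h1
  rw [ey, eγ] at h2
  have hAM : u*v ≤ (u^2 + v^2)/2 := by nlinarith [sq_nonneg (u - v)]
  have hfin : z + y - 2*z*y - 2*γ*(1-γ) = ((1-2*γ)^2 - u*v)/2 := by
    simp only [hu, hv]; ring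
  rw [hfin]
  nlinarith [mul_le_mul_of_nonneg_left hAM hK.le, h1, h2]


lemma mul_log_mul {x y : ℝ} (hx : 0 ≤ x) (hy : 0 ≤ y) :
    (x*y)*Real.log (x*y) = y*(x*Real.log x) + x*(y*Real.log y) := by
  rcases eq_or_lt_of_le hx with h | hx'
  · simp [← h]
  rcases eq_or_lt_of_le hy with h | hy'
  · simp [← h]
  rw [Real.log_mul (ne_of_gt hx') (ne_of_gt hy')]
  ring

lemma ent_sum_eq {y : ℝ} :
    y * Real.log y + (1-y) * Real.log (1-y) = -Real.binEntropy y := by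
  simp [Real.binEntropy, Real.log_inv]
  ring

lemma lemmaB {γ r s y : ℝ} (hγ0 : 0 < γ) (hγ1 : γ < 1/2)
    (hr : 0 ≤ r) (hs : 0 ≤ s) (hy0 : 0 ≤ y) (hy1 : y ≤ 1) :
    -((r+s) * (2*Real.binEntropy γ - (Lf (1-2*γ) / (1-2*γ)) * (2*γ*(1-γ))))
      - (Lf (1-2*γ) / (1-2*γ)) * (r*(1-y)+s*y) ≤
    (r*y)*Real.log (r*y) + (r*(1-y))*Real.log (r*(1-y))
      + (s*y)*Real.log (s*y) + (s*(1-y))*Real.log (s*(1-y))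
      - (r+s)*Real.log (r+s) := by
  set K : ℝ := Lf (1-2*γ) / (1-2*γ) with hKdef
  have h1y : 0 ≤ 1 - y := by linarith
  rcases eq_or_lt_of_le (by positivity : (0:ℝ) ≤ r + s) with hP | hP
  · have hr0 : r = 0 := by linarith
    have hs0 : s = 0 := by linarith
    simp [hr0, hs0]
  · set P : ℝ := r + s with hPdef
    set z : ℝ := r / P with hzdef
    have hz0 : 0 ≤ z := by positivity
    have hz1 : z ≤ 1 := by
      rw [hzdef, div_le_one hP]; linarith
    have hrPz : r = P * z := by rw [hzdef]; field_simp
    have hsPz : s = P * (1-z) := by rw [hzdef]; field_simp; ring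
    have key := lemmaA hγ0 hγ1 hz0 hz1 hy0 hy1
    rw [← hKdef] at key
    -- rewrite RHS
    have e1 : (r*y)*Real.log (r*y) = y*(r*Real.log r) + r*(y*Real.log y) :=
      mul_log_mul hr hy0
    have e2 : (r*(1-y))*Real.log (r*(1-y)) = (1-y)*(r*Real.log r) + r*((1-y)*Real.log (1-y)) :=
      mul_log_mul hr h1y
    have e3 : (s*y)*Real.log (s*y) = y*(s*Real.log s) + s*(y*Real.log y) :=
      mul_log_mul hs hy0
    have e4 : (s*(1-y))*Real.log (s*(1-y)) = (1-y)*(s*Real.log s) + s*((1-y)*Real.log (1-y)) :=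
      mul_log_mul hs h1y
    have e5 : r*Real.log r = z*(P*Real.log P) + P*(z*Real.log z) := by
      rw [hrPz, mul_comm P z]
      linarith [mul_log_mul hz0 hP.le]
    have e6 : s*Real.log s = (1-z)*(P*Real.log P) + P*((1-z)*Real.log (1-z)) := by
      rw [hsPz, mul_comm P (1-z)]
      linarith [mul_log_mul (show (0:ℝ) ≤ 1 - z by linarith) hP.le]
    have eEnty : y * Real.log y + (1-y) * Real.log (1-y) = -Real.binEntropy y := ent_sum_eq
    have eEntz : z * Real.log z + (1-z) * Real.log (1-z) = -Real.binEntropy z := ent_sum_eq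
    have hRHS : (r*y)*Real.log (r*y) + (r*(1-y))*Real.log (r*(1-y))
      + (s*y)*Real.log (s*y) + (s*(1-y))*Real.log (s*(1-y))
      - (r+s)*Real.log (r+s)
        = -(P * (Real.binEntropy z + Real.binEntropy y)) := by
      rw [e1, e2, e3, e4, e5, e6, ← hPdef, hrPz, hsPz]
      linear_combination P*eEnty + P*eEntz
    rw [hRHS]
    have hsub : r*(1-y) + s*y = P * (z + y - 2*z*y) := by
      rw [hrPz, hsPz]; ring
    rw [hsub]
    have hmul := mul_le_mul_of_nonneg_left key hP.le
    nlinarith [hmul]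


lemma converse_core {W : Type} [Fintype W] {γ : ℝ} (hγ0 : 0 < γ) (hγ1 : γ < 1/2)
    (F : Bool → W → ℝ) (g : W → Bool → ℝ)
    (hF : ∀ z w, 0 ≤ F z w) (hg : ∀ w y, 0 ≤ g w y)
    (hg1 : ∀ w, g w true + g w false = 1)
    (hm : ∀ z y, (∑ w, F z w * g w y)
      = (if z = y then (1 - 2*γ*(1-γ))/2 else (2*γ*(1-γ))/2)) :
    Real.log 2 + Real.binEntropy (2*γ*(1-γ)) - 2*Real.binEntropy γ ≤
      MI (fun (zy : Bool × Bool) w => F zy.1 w * g w zy.2) := by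
  have hc0 : 0 < 2*γ*(1-γ) := by nlinarith
  have hc1 : 2*γ*(1-γ) < 1/2 := by nlinarith [sq_nonneg (1-2*γ)]
  set c : ℝ := 2*γ*(1-γ) with hcdef
  set K : ℝ := Lf (1-2*γ) / (1-2*γ) with hKdef
  set J : Bool × Bool → W → ℝ := fun u w => F u.1 w * g w u.2 with hJdef
  have hJ0 : ∀ u w, 0 ≤ J u w := fun u w => mul_nonneg (hF _ _) (hg _ _)
  set m : Bool × Bool → ℝ := fun u => if u.1 = u.2 then (1-c)/2 else c/2 with hmdef
  have hm0 : ∀ u, 0 < m u := by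
    intro u
    simp only [hmdef]
    split <;> [linarith; linarith]
  have hmu : ∀ u, (∑ w, J u w) = m u := by
    intro u
    simpa only [hmdef, hJdef] using hm u.1 u.2
  set P : W → ℝ := fun w => F true w + F false w with hPdef
  have hP0 : ∀ w, 0 ≤ P w := fun w => add_nonneg (hF _ _) (hF _ _)
  have hPw : ∀ w, (∑ u : Bool × Bool, J u w) = P w := by
    intro w
    rw [Fintype.sum_prod_type]
    simp only [hJdef, hPdef, Fintype.sum_bool]
    linear_combination (F true w) * (hg1 w) + (F false w) * (hg1 w)
  -- per-term log decomposition
  have hterm : ∀ u (w : W), J u w * Real.log (J u w / ((∑ w', J u w') * (∑ u', J u' w)))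
      = J u w * Real.log (J u w) - J u w * Real.log (m u) - J u w * Real.log (P w) := by
    intro u w
    rw [hmu u, hPw w]
    rcases eq_or_lt_of_le (hJ0 u w) with hz | hpos
    · rw [← hz]; ring
    · have hPpos : 0 < P w := by
        calc (0:ℝ) < J u w := hpos
        _ ≤ ∑ u', J u' w := Finset.single_le_sum (fun u' _ => hJ0 u' w) (Finset.mem_univ u)
        _ = P w := hPw w
      rw [Real.log_div (ne_of_gt hpos) (mul_pos (hm0 u) hPpos).ne',
          Real.log_mul (ne_of_gt (hm0 u)) (ne_of_gt hPpos)]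
      ring
  have hMIeq : MI (fun (zy : Bool × Bool) w => F zy.1 w * g w zy.2)
      = (∑ w, ((∑ u : Bool × Bool, J u w * Real.log (J u w)) - P w * Real.log (P w)))
        - (∑ u : Bool × Bool, m u * Real.log (m u)) := by
    unfold MI
    calc (∑ u : Bool × Bool, ∑ w, J u w * Real.log (J u w / ((∑ w', J u w') * (∑ u', J u' w))))
        = ∑ u : Bool × Bool, ∑ w, (J u w * Real.log (J u w) - J u w * Real.log (m u) - J u w * Real.log (P w)) := by
          exact Finset.sum_congr rfl (fun u _ => Finset.sum_congr rfl (fun w _ => hterm u w))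
      _ = (∑ u : Bool × Bool, ∑ w, J u w * Real.log (J u w))
          - (∑ u : Bool × Bool, m u * Real.log (m u))
          - (∑ w, P w * Real.log (P w)) := by
          simp only [Finset.sum_sub_distrib]
          have h2 : ∀ u : Bool × Bool, (∑ w, J u w * Real.log (m u)) = m u * Real.log (m u) :=
            fun u => by rw [← Finset.sum_mul, hmu]
          have h3 : (∑ u : Bool × Bool, ∑ w, J u w * Real.log (P w)) = ∑ w, P w * Real.log (P w) := by
            rw [Finset.sum_comm]
            exact Finset.sum_congr rfl fun w _ => by rw [← Finset.sum_mul, hPw]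
          rw [h3]
          simp only [h2]
      _ = (∑ w, ((∑ u : Bool × Bool, J u w * Real.log (J u w)) - P w * Real.log (P w)))
          - (∑ u : Bool × Bool, m u * Real.log (m u)) := by
          simp only [Finset.sum_sub_distrib]
          rw [Finset.sum_comm (f := fun u (w : W) => J u w * Real.log (J u w))]
          ring
  have hup : ∀ w : W, -(P w * (2*Real.binEntropy γ - K*c)) - K*(J (true,false) w + J (false,true) w)
      ≤ (∑ u : Bool × Bool, J u w * Real.log (J u w)) - P w * Real.log (P w) := by
    intro w
    have hgf : g w false = 1 - g w true := by linarith [hg1 w]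
    have h := lemmaB (r := F true w) (s := F false w) (y := g w true) hγ0 hγ1
      (hF _ _) (hF _ _) (hg _ _) (by linarith [hg w false, hg1 w])
    rw [← hKdef, ← hcdef] at h
    rw [Fintype.sum_prod_type]
    simp only [Fintype.sum_bool, hJdef, hPdef, hgf]
    linarith [h]
  have hFz : ∀ z, (∑ w, F z w) = 1/2 := by
    intro z
    have e : (∑ w, F z w) = (∑ w, J (z,true) w) + (∑ w, J (z,false) w) := by
      rw [← Finset.sum_add_distrib]
      apply Finset.sum_congr rfl; intro w _
      simp only [hJdef]
      linear_combination (-(F z w)) * (hg1 w)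
    rw [e, hmu, hmu]
    cases z <;> simp [hmdef] <;> ring
  have hsP : (∑ w, P w) = 1 := by
    simp only [hPdef]
    rw [Finset.sum_add_distrib, hFz, hFz]
    norm_num
  have hslower : (∑ w, (-(P w * (2*Real.binEntropy γ - K*c)) - K*(J (true,false) w + J (false,true) w)))
      = -(2*Real.binEntropy γ - K*c) - K*c := by
    calc (∑ w, (-(P w * (2*Real.binEntropy γ - K*c)) - K*(J (true,false) w + J (false,true) w)))
        = (∑ w, (P w * (-(2*Real.binEntropy γ - K*c)) + ((J (true,false) w) * (-K) + (J (false,true) w) * (-K)))) := by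
          apply Finset.sum_congr rfl; intros; ring
      _ = (∑ w, P w) * (-(2*Real.binEntropy γ - K*c))
          + ((∑ w, J (true,false) w) * (-K) + (∑ w, J (false,true) w) * (-K)) := by
          rw [Finset.sum_add_distrib, Finset.sum_add_distrib, ← Finset.sum_mul, ← Finset.sum_mul, ← Finset.sum_mul]
      _ = -(2*Real.binEntropy γ - K*c) - K*c := by
          rw [hsP, hmu, hmu]
          simp [hmdef]
          ring
  have hment : (∑ u : Bool × Bool, m u * Real.log (m u)) = -(Real.log 2 + Real.binEntropy c) := by
    rw [Fintype.sum_prod_type]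
    simp [hmdef]
    rw [Real.log_div (by linarith : (1:ℝ)-c ≠ 0) (two_ne_zero),
        Real.log_div (ne_of_gt hc0) (two_ne_zero)]
    linear_combination ent_sum_eq (y := c)
  rw [hMIeq, hment]
  have hs := Finset.sum_le_sum (s := Finset.univ) (fun w _ => hup w)
  rw [hslower] at hs
  linarith [hs]

noncomputable def T (e : ℝ) (u v : Bool) : ℝ := if u = v then 1-e else e

lemma T_nonneg {e : ℝ} (h0 : 0 ≤ e) (h1 : e ≤ 1) (u v : Bool) : 0 ≤ T e u v := by
  unfold T; split <;> linarith

lemma logdiv_helper {J M P : ℝ} (hJ : 0 < J) (hM : 0 < M) (hP : 0 < P) :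
    J * Real.log (J/(M*P)) = J*Real.log J - J*Real.log M - J*Real.log P := by
  rw [Real.log_div (ne_of_gt hJ) (mul_pos hM hP).ne', Real.log_mul hM.ne' hP.ne']
  ring

lemma log_half : Real.log (1/2 : ℝ) = -Real.log 2 := by
  rw [one_div, Real.log_inv]

lemma MI_sym {e : ℝ} (he0 : 0 < e) (he1 : e < 1) :
    MI (fun z w : Bool => (1/2) * T e z w) = Real.log 2 - Real.binEntropy e := by
  have h1e : 0 < 1 - e := by linarith
  unfold MI
  rw [Fintype.sum_bool]
  rw [Fintype.sum_bool, Fintype.sum_bool, Fintype.sum_bool, Fintype.sum_bool,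
      Fintype.sum_bool, Fintype.sum_bool, Fintype.sum_bool, Fintype.sum_bool]
  simp only [T, Bool.true_eq_false, Bool.false_eq_true, if_true, if_false, reduceIte]
  have hm : (1:ℝ)/2 * (1-e) + 1/2 * e = 1/2 := by ring
  rw [hm]
  have hm2 : (1:ℝ)/2 * e + 1/2 * (1-e) = 1/2 := by ring
  rw [hm2]
  have e1 := logdiv_helper (J := 1/2*(1-e)) (M := 1/2) (P := 1/2) (by linarith) (by norm_num) (by norm_num)
  have e2 := logdiv_helper (J := 1/2*e) (M := 1/2) (P := 1/2) (by linarith) (by norm_num) (by norm_num)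
  rw [e1, e2]
  have l1 : Real.log (1/2*(1-e)) = -Real.log 2 + Real.log (1-e) := by
    rw [Real.log_mul (by norm_num) h1e.ne', log_half]
  have l2 : Real.log (1/2*e) = -Real.log 2 + Real.log e := by
    rw [Real.log_mul (by norm_num) he0.ne', log_half]
  rw [l1, l2, log_half]
  linear_combination ent_sum_eq (y := e)

lemma MI_decomp {U W : Type*} [Fintype U] [Fintype W] (J : U → W → ℝ)
    (h0 : ∀ u w, 0 ≤ J u w) :
    MI J = (∑ u, ∑ w, J u w * Real.log (J u w))
      - (∑ u, (∑ w, J u w) * Real.log (∑ w, J u w))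
      - (∑ w, (∑ u, J u w) * Real.log (∑ u, J u w)) := by
  unfold MI
  have hterm : ∀ u w, J u w * Real.log (J u w / ((∑ w', J u w') * (∑ u', J u' w)))
      = J u w * Real.log (J u w) - J u w * Real.log (∑ w', J u w')
        - J u w * Real.log (∑ u', J u' w) := by
    intro u w
    rcases eq_or_lt_of_le (h0 u w) with hz | hpos
    · rw [← hz]; simp
    · have hr : 0 < ∑ w', J u w' :=
        lt_of_lt_of_le hpos (Finset.single_le_sum (fun w' _ => h0 u w') (Finset.mem_univ w))
      have hcl : 0 < ∑ u', J u' w :=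
        lt_of_lt_of_le hpos (Finset.single_le_sum (fun u' _ => h0 u' w) (Finset.mem_univ u))
      rw [Real.log_div hpos.ne' (mul_pos hr hcl).ne', Real.log_mul hr.ne' hcl.ne']
      ring
  simp only [hterm]
  simp only [Finset.sum_sub_distrib]
  have h2 : ∀ u, (∑ w, J u w * Real.log (∑ w', J u w')) = (∑ w, J u w) * Real.log (∑ w', J u w') :=
    fun u => by rw [← Finset.sum_mul]
  have h3 : (∑ u, ∑ w, J u w * Real.log (∑ u', J u' w))
      = ∑ w, (∑ u, J u w) * Real.log (∑ u', J u' w) := by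
    rw [Finset.sum_comm]
    exact Finset.sum_congr rfl fun w _ => by rw [← Finset.sum_mul]
  rw [h3]
  simp only [h2]

lemma MI_XYW {β γ : ℝ} (hβ0 : 0 < β) (hβ1 : β < 1) (hγ0 : 0 < γ) (hγ1 : γ < 1) :
    MI (fun (xy : Bool × Bool) (w : Bool) => (1/2) * T β w xy.1 * T γ w xy.2)
      = Real.log 2 + Real.binEntropy (β+γ-2*β*γ)
        - Real.binEntropy β - Real.binEntropy γ := by
  have hb0 : 0 < β+γ-2*β*γ := by nlinarith
  have hb1 : β+γ-2*β*γ < 1 := by nlinarith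
  have h1β : 0 < 1-β := by linarith
  have h1γ : 0 < 1-γ := by linarith
  rw [MI_decomp _ (fun u w => by
    exact mul_nonneg (mul_nonneg (by norm_num) (T_nonneg hβ0.le hβ1.le _ _)) (T_nonneg hγ0.le hγ1.le _ _))]
  have S1 : (∑ u : Bool × Bool, ∑ w : Bool, ((1/2) * T β w u.1 * T γ w u.2) * Real.log ((1/2) * T β w u.1 * T γ w u.2))
      = -Real.log 2 - Real.binEntropy β - Real.binEntropy γ := by
    rw [Fintype.sum_prod_type]
    simp only [Fintype.sum_bool, T, Bool.true_eq_false, Bool.false_eq_true, if_true, if_false, reduceIte]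
    have l1 : Real.log (1/2*(1-β)*(1-γ)) = -Real.log 2 + Real.log (1-β) + Real.log (1-γ) := by
      rw [Real.log_mul (by positivity) h1γ.ne', Real.log_mul (by norm_num) h1β.ne', log_half]
    have l2 : Real.log (1/2*(1-β)*γ) = -Real.log 2 + Real.log (1-β) + Real.log γ := by
      rw [Real.log_mul (by positivity) hγ0.ne', Real.log_mul (by norm_num) h1β.ne', log_half]
    have l3 : Real.log (1/2*β*(1-γ)) = -Real.log 2 + Real.log β + Real.log (1-γ) := by
      rw [Real.log_mul (by positivity) h1γ.ne', Real.log_mul (by norm_num) hβ0.ne', log_half]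
    have l4 : Real.log (1/2*β*γ) = -Real.log 2 + Real.log β + Real.log γ := by
      rw [Real.log_mul (by positivity) hγ0.ne', Real.log_mul (by norm_num) hβ0.ne', log_half]
    rw [l1, l2, l3, l4]
    linear_combination ent_sum_eq (y := β) + ent_sum_eq (y := γ)
  have S3 : (∑ w : Bool, (∑ u : Bool × Bool, (1/2) * T β w u.1 * T γ w u.2)
      * Real.log (∑ u : Bool × Bool, (1/2) * T β w u.1 * T γ w u.2)) = -Real.log 2 := by
    have hcol : ∀ w : Bool, (∑ u : Bool × Bool, (1/2) * T β w u.1 * T γ w u.2) = 1/2 := by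
      intro w
      rw [Fintype.sum_prod_type]
      simp only [Fintype.sum_bool, T, Bool.true_eq_false, Bool.false_eq_true, if_true, if_false, reduceIte]
      cases w <;> (simp only [Bool.true_eq_false, Bool.false_eq_true, if_true, if_false, reduceIte]; ring)
    simp only [hcol]
    rw [Fintype.sum_bool, log_half]
    ring
  have S2 : (∑ u : Bool × Bool, (∑ w : Bool, (1/2) * T β w u.1 * T γ w u.2)
      * Real.log (∑ w : Bool, (1/2) * T β w u.1 * T γ w u.2))
      = -Real.log 2 - Real.binEntropy (β+γ-2*β*γ) := by
    have hrow : ∀ u : Bool × Bool, (∑ w : Bool, (1/2) * T β w u.1 * T γ w u.2)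
        = (if u.1 = u.2 then (1-(β+γ-2*β*γ))/2 else (β+γ-2*β*γ)/2) := by
      intro u
      rcases u with ⟨x, y⟩
      rw [Fintype.sum_bool]
      cases x <;> cases y <;>
        (simp only [T, Bool.true_eq_false, Bool.false_eq_true, if_true, if_false, reduceIte]; ring)
    simp only [hrow]
    rw [Fintype.sum_prod_type]
    simp only [Fintype.sum_bool, Bool.true_eq_false, Bool.false_eq_true, if_true, if_false, reduceIte]
    have l5 : Real.log ((1-(β+γ-2*β*γ))/2) = Real.log (1-(β+γ-2*β*γ)) - Real.log 2 :=
      Real.log_div (by linarith) (by norm_num)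
    have l6 : Real.log ((β+γ-2*β*γ)/2) = Real.log (β+γ-2*β*γ) - Real.log 2 :=
      Real.log_div (by linarith) (by norm_num)
    rw [l5, l6]
    linear_combination ent_sum_eq (y := β+γ-2*β*γ)
  rw [S1, S2, S3]
  ring



lemma omega_mono {a t1 t2 : ℝ} (ha0 : 0 < a) (ha1 : a < 1/2)
    (h1 : 0 < t1) (h12 : t1 < t2) (h2 : t2 < 1/2) :
    Real.binEntropy t1 - Real.binEntropy (a + (1-2*a)*t1)
      < Real.binEntropy t2 - Real.binEntropy (a + (1-2*a)*t2) := by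
  set f : ℝ → ℝ := fun t => Real.binEntropy t - Real.binEntropy (a + (1-2*a)*t) with hf
  have key : StrictMonoOn f (Set.Icc t1 t2) := by
    apply strictMonoOn_of_deriv_pos (convex_Icc t1 t2)
    · apply ContinuousOn.sub Real.binEntropy_continuous.continuousOn
      exact (Real.binEntropy_continuous.comp (by fun_prop)).continuousOn
    · intro x hx
      rw [interior_Icc] at hx
      have hx0 : 0 < x := h1.trans hx.1
      have hx2 : x < 1/2 := hx.2.trans h2
      set g : ℝ := a + (1-2*a)*x with hg
      have hgx : x < g := by rw [hg]; nlinarith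
      have hg2 : g < 1/2 := by rw [hg]; nlinarith
      have hg0 : 0 < g := by linarith
      have hd1 : HasDerivAt Real.binEntropy (Real.log (1-x) - Real.log x) x :=
        Real.hasDerivAt_binEntropy (ne_of_gt hx0) (by intro h; rw [h] at hx2; linarith)
      have hinner : HasDerivAt (fun t : ℝ => a + (1-2*a)*t) (1-2*a) x := by
        simpa using ((hasDerivAt_id x).const_mul (1-2*a)).const_add a
      have hd2 : HasDerivAt (fun t : ℝ => Real.binEntropy (a + (1-2*a)*t))
          ((Real.log (1-g) - Real.log g) * (1-2*a)) x := by
        exact (Real.hasDerivAt_binEntropy (ne_of_gt hg0)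
          (by intro h; rw [h] at hg2; linarith)).comp x hinner
      have hD : HasDerivAt f ((Real.log (1-x) - Real.log x)
          - (Real.log (1-g) - Real.log g) * (1-2*a)) x := hd1.sub hd2
      rw [hD.deriv]
      have hlt1 : Real.log x < Real.log g := Real.log_lt_log hx0 hgx
      have hlt2 : Real.log (1-g) < Real.log (1-x) :=
        Real.log_lt_log (by linarith) (by linarith)
      have hpos : 0 ≤ Real.log (1-g) - Real.log g := by
        have := Real.log_le_log (by linarith : (0:ℝ) < g) (by linarith : g ≤ 1-g)
        linarith
      nlinarith [hpos, hlt1, hlt2]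
  have := key (Set.mem_Icc.2 ⟨le_refl t1, h12.le⟩) (Set.mem_Icc.2 ⟨h12.le, le_refl t2⟩) h12
  simpa [hf] using this



set_option maxHeartbeats 1000000 in
/-- Strict sub-optimality of direct channel synthesis at low
common randomness rates: assume `𝒳 = 𝒵 = 𝒴 = {0,1}`, that `q_X`, `q_Z` and
`q_Y` are all `Bernoulli(1/2)`, that `0 < q_{X,Z}(X ≠ Z) < q_{X,Y}(X ≠ Y) < 1/2`,
and that there exists a distribution compatible with `(q_{X,Z}, q_{X,Y})`. Then
there exists `r > 0` such that for every `R_c ∈ [0,r)`, the minimum of `R` over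
the union of the regions `S^{d.c.s.}(q_{X,Z,Y})` (over all compatible
`q_{X,Z,Y}`) strictly exceeds the minimum of `R` over `S^{r.c.s.}`. -/
theorem strict_suboptimality_direct_channel_synthesis
    (qXZ : Bool → Bool → ℝ) (qXY : Bool → Bool → ℝ)
    (hqXZ : IsPMF (fun s : Bool × Bool => qXZ s.1 s.2))
    (hqXY : IsPMF (fun s : Bool × Bool => qXY s.1 s.2))
    (hX : ∀ x, (∑ z, qXZ x z) = 1 / 2)
    (hZ : ∀ z, (∑ x, qXZ x z) = 1 / 2)
    (hX' : ∀ x, (∑ y, qXY x y) = 1 / 2)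
    (hY : ∀ y, (∑ x, qXY x y) = 1 / 2)
    (hpos : 0 < qXZ true false + qXZ false true)
    (hlt : qXZ true false + qXZ false true < qXY true false + qXY false true)
    (hhalf : qXY true false + qXY false true < 1 / 2)
    (hfeas : ∃ q : Bool → Bool → Bool → ℝ, Compatible qXZ qXY q) :
    ∃ r > (0 : ℝ), ∀ Rc : ℝ, 0 ≤ Rc → Rc < r →
      sInf {R : ℝ | (R, Rc) ∈ Srcs qXZ qXY} <
        sInf {R : ℝ | ∃ q : Bool → Bool → Bool → ℝ,
          Compatible qXZ qXY q ∧ (R, Rc) ∈ Sdcs q} := by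
  classical
  -- abbreviations
  set a := qXZ true false + qXZ false true with ha
  set b := qXY true false + qXY false true with hb
  have hXt := hX true
  have hXf := hX false
  have hZt := hZ true
  have hZf := hZ false
  rw [Fintype.sum_bool] at hXt hXf hZt hZf
  have hX't := hX' true
  have hX'f := hX' false
  have hYt := hY true
  have hYf := hY false
  rw [Fintype.sum_bool] at hX't hX'f hYt hYf
  have vtf : qXZ true false = a/2 := by rw [ha]; linarith
  have vft : qXZ false true = a/2 := by rw [ha]; linarith
  have vtt : qXZ true true = (1-a)/2 := by rw [ha]; linarith
  have vff : qXZ false false = (1-a)/2 := by rw [ha]; linarith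
  have wtf : qXY true false = b/2 := by rw [hb]; linarith
  have wft : qXY false true = b/2 := by rw [hb]; linarith
  have wtt : qXY true true = (1-b)/2 := by rw [hb]; linarith
  have wff : qXY false false = (1-b)/2 := by rw [hb]; linarith
  have ha0 : 0 < a := hpos
  have hab : a < b := hlt
  have hb12 : b < 1/2 := hhalf
  have ha12 : a < 1/2 := by linarith
  have h2a : (0:ℝ) < 1 - 2*a := by linarith
  set c := (b - a)/(1 - 2*a) with hcdef
  have hc0 : 0 < c := div_pos (by linarith) h2a
  have hcb : c*(1-2*a) = b - a := by rw [hcdef]; exact div_mul_cancel₀ _ h2a.ne'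
  have hb2 : b = a + (1-2*a)*c := by linear_combination -hcb
  have hc12 : c < 1/2 := by rw [hcdef, div_lt_iff₀ h2a]; linarith
  set s0 := Real.sqrt (1-2*c) with hs0def
  have hs0pos : 0 < s0 := Real.sqrt_pos.2 (by linarith)
  have hs0sq : s0^2 = 1-2*c := Real.sq_sqrt (by linarith)
  have hs0lt : s0 < 1 := by nlinarith [hs0sq, hs0pos, sq_nonneg (s0-1)]
  set γ := (1 - s0)/2 with hγdef
  have hγ0 : 0 < γ := by rw [hγdef]; linarith
  have hγ12 : γ < 1/2 := by rw [hγdef]; linarith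
  have hγc : 2*γ*(1-γ) = c := by rw [hγdef]; nlinarith [hs0sq]
  have hγc' : γ < c := by
    rw [hγdef]
    nlinarith [mul_pos hs0pos (show (0:ℝ) < 1 - s0 by linarith), hs0sq]
  set β := a + (1-2*a)*γ with hβdef
  have hβ0 : 0 < β := by rw [hβdef]; nlinarith
  have hβ12 : β < 1/2 := by rw [hβdef]; nlinarith
  have hβb : β < b := by rw [hβdef, hb2]; nlinarith
  have hbval : b = β + γ - 2*β*γ := by
    rw [hβdef]; linear_combination hb2 - (1-2*a)*hγc
  set Cst := Real.log 2 + Real.binEntropy c - 2*Real.binEntropy γ with hCst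
  set Rst := Real.log 2 + Real.binEntropy b - Real.binEntropy β - Real.binEntropy γ with hRst
  have hgap : Rst < Cst := by
    have hom := omega_mono ha0 ha12 hγ0 hγc' hc12
    rw [← hβdef, ← hb2] at hom
    rw [hCst, hRst]
    linarith
  refine ⟨Cst - Rst, by linarith, ?_⟩
  intro Rc hRc0 hRcr
  -- binEntropy facts
  have hbEβb : Real.binEntropy β ≤ Real.binEntropy b := by
    have := Real.binEntropy_strictMonoOn.monotoneOn
      (Set.mem_Icc.2 ⟨hβ0.le, by norm_num; linarith⟩)
      (Set.mem_Icc.2 ⟨by linarith, by norm_num; linarith⟩) hβb.le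
    exact this
  have hRst0 : 0 ≤ Rst := by
    have := Real.binEntropy_le_log_two (p := γ)
    rw [hRst]; linarith
  -- Achievability
  have hach : (Rst, Rc) ∈ Srcs qXZ qXY := by
    have hγ1 : γ < 1 := by linarith
    have ha1 : a < 1 := by linarith
    have hβ1 : β < 1 := by linarith
    have hb3 : b = a + (1-2*a)*(2*γ*(1-γ)) := by rw [hγc]; exact hb2
    refine ⟨hRst0, hRc0, Bool, inferInstance, by norm_num [Fintype.card_bool],
      (fun x z w y => (1/2) * T γ w z * T a z x * T γ w y), ?_, ?_, ?_, ?_, ?_, ?_⟩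
    · constructor
      · intro s'
        exact mul_nonneg (mul_nonneg (mul_nonneg (by norm_num)
          (T_nonneg hγ0.le hγ1.le _ _)) (T_nonneg ha0.le ha1.le _ _))
          (T_nonneg hγ0.le hγ1.le _ _)
      · simp only [Fintype.sum_prod_type, Fintype.sum_bool, T, Bool.true_eq_false, Bool.false_eq_true, if_true, if_false, reduceIte]
        ring
    · intro x z
      cases x <;> cases z
      · simp only [Fintype.sum_bool, T, Bool.true_eq_false, Bool.false_eq_true, if_true, if_false, reduceIte]; rw [vff]; ring
      · simp only [Fintype.sum_bool, T, Bool.true_eq_false, Bool.false_eq_true, if_true, if_false, reduceIte]; rw [vft]; ring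
      · simp only [Fintype.sum_bool, T, Bool.true_eq_false, Bool.false_eq_true, if_true, if_false, reduceIte]; rw [vtf]; ring
      · simp only [Fintype.sum_bool, T, Bool.true_eq_false, Bool.false_eq_true, if_true, if_false, reduceIte]; rw [vtt]; ring
    · intro x y
      cases x <;> cases y
      · simp only [Fintype.sum_bool, T, Bool.true_eq_false, Bool.false_eq_true, if_true, if_false, reduceIte]; rw [wff]; linear_combination (1/2)*hb3
      · simp only [Fintype.sum_bool, T, Bool.true_eq_false, Bool.false_eq_true, if_true, if_false, reduceIte]; rw [wft]; linear_combination (-(1/2))*hb3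
      · simp only [Fintype.sum_bool, T, Bool.true_eq_false, Bool.false_eq_true, if_true, if_false, reduceIte]; rw [wtf]; linear_combination (-(1/2))*hb3
      · simp only [Fintype.sum_bool, T, Bool.true_eq_false, Bool.false_eq_true, if_true, if_false, reduceIte]; rw [wtt]; linear_combination (1/2)*hb3
    · refine ⟨fun z x => T a z x, fun z w => T γ z w, fun w y => T γ w y, ?_, ?_, ?_, ?_⟩
      · intro z
        refine ⟨fun x => T_nonneg ha0.le ha1.le _ _, ?_⟩
        rw [Fintype.sum_bool]
        cases z <;> (simp only [T, Bool.true_eq_false, Bool.false_eq_true, if_true, if_false, reduceIte]; ring)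
      · intro z
        refine ⟨fun w => T_nonneg hγ0.le hγ1.le _ _, ?_⟩
        rw [Fintype.sum_bool]
        cases z <;> (simp only [T, Bool.true_eq_false, Bool.false_eq_true, if_true, if_false, reduceIte]; ring)
      · intro w
        refine ⟨fun y => T_nonneg hγ0.le hγ1.le _ _, ?_⟩
        rw [Fintype.sum_bool]
        cases w <;> (simp only [T, Bool.true_eq_false, Bool.false_eq_true, if_true, if_false, reduceIte]; ring)
      · intro x z w y
        have hSz : (∑ x', ∑ w', ∑ y', (1/2) * T γ w' z * T a z x' * T γ w' y') = 1/2 := by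
          cases z <;> (simp only [Fintype.sum_bool, T, Bool.true_eq_false, Bool.false_eq_true, if_true, if_false, reduceIte]; ring)
        rw [hSz]
        cases z <;> cases w <;> (simp only [T, Bool.true_eq_false, Bool.false_eq_true, if_true, if_false, reduceIte]; ring)
    · have hZW : (fun z w => ∑ x, ∑ y, (1/2) * T γ w z * T a z x * T γ w y)
          = fun z w : Bool => (1/2) * T γ z w := by
        funext z w
        cases z <;> cases w <;> (simp only [Fintype.sum_bool, T, Bool.true_eq_false, Bool.false_eq_true, if_true, if_false, reduceIte]; ring)
      rw [hZW, MI_sym hγ0 hγ1]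
      have := Real.binEntropy_nonneg hβ0.le hβ1.le
      rw [hRst]
      linarith
    · have hXYW : (fun (xy : Bool × Bool) (w : Bool) => ∑ z, (1/2) * T γ w z * T a z xy.1 * T γ w xy.2)
          = fun xy w => (1/2) * T β w xy.1 * T γ w xy.2 := by
        funext xy w
        rcases xy with ⟨x, y⟩
        cases x <;> cases w <;>
          (simp only [Fintype.sum_bool, T, Bool.true_eq_false, Bool.false_eq_true, if_true, if_false, reduceIte]; rw [hβdef]; ring)
      rw [hXYW, MI_XYW hβ0 hβ1 hγ0 hγ1, ← hbval, hRst]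
      linarith
  -- Converse
  have hconv : ∀ R ∈ {R : ℝ | ∃ q : Bool → Bool → Bool → ℝ,
      Compatible qXZ qXY q ∧ (R, Rc) ∈ Sdcs q}, Cst - Rc ≤ R := by
    intro R hR
    obtain ⟨q, hqc, hdcs⟩ := hR
    obtain ⟨hqXZm, hqXYm, kX, kY, hkX, hkY, hqeq⟩ := hqc
    obtain ⟨hR0, hRc0', W, hW, hcard, p, hpmf, hmargq, hmark, hMI1, hMI2⟩ := hdcs
    have hMI2' : MI (fun (zy : Bool × Bool) w => ∑ x, p x zy.1 w zy.2) ≤ R + Rc := hMI2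
    have hS : ∀ z, (∑ x', ∑ y', q x' z y') = 1/2 := by
      intro z
      have e : (∑ x', ∑ y', q x' z y') = ∑ x', qXZ x' z :=
        Finset.sum_congr rfl (fun x _ => hqXZm x z)
      rw [e, Fintype.sum_bool]
      cases z
      · linarith only [hZf]
      · linarith only [hZt]
    have hkXv : ∀ z x, kX z x = 2 * qXZ x z := by
      intro z x
      have h1 := hqXZm x z
      have h2 : ∀ y, q x z y = 1/2 * kX z x * kY z y := by
        intro y; rw [hqeq x z y, hS z]
      rw [Fintype.sum_bool, h2 true, h2 false] at h1
      have h3 := (hkY z).2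
      rw [Fintype.sum_bool] at h3
      linear_combination 2*h1 - (kX z x)*h3
    have hqv : ∀ x z y, q x z y = qXZ x z * kY z y := by
      intro x z y; rw [hqeq x z y, hS z, hkXv z x]; ring
    have h3t := (hkY true).2
    have h3f := (hkY false).2
    rw [Fintype.sum_bool] at h3t h3f
    have hEq1 : qXZ true true * kY true true + qXZ true false * kY false true = qXY true true := by
      have h1 := hqXYm true true
      rw [Fintype.sum_bool, hqv true true true, hqv true false true] at h1
      exact h1
    have hEq2 : qXZ false true * kY true true + qXZ false false * kY false true = qXY false true := by
      have h1 := hqXYm false true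
      rw [Fintype.sum_bool, hqv false true true, hqv false false true] at h1
      exact h1
    rw [vtt, vtf, wtt] at hEq1
    rw [vft, vff, wft] at hEq2
    have huv : kY true true + kY false true = 1 := by linarith only [hEq1, hEq2]
    have hvc : kY false true = c := by
      have h4 : kY false true * (1-2*a) = c * (1-2*a) := by
        rw [hcb]
        linear_combination 2*hEq2 - a*huv
      exact mul_right_cancel₀ (ne_of_gt h2a) h4
    have huc : kY true true = 1 - c := by linarith only [huv, hvc]
    have hYtf : kY true false = c := by linarith only [h3t, huc]
    have hYff : kY false false = 1 - c := by linarith only [h3f, hvc]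
    have hqZY : ∀ z y, (∑ x, q x z y) = (if z = y then (1-c)/2 else c/2) := by
      intro z y
      rw [Fintype.sum_bool, hqv true z y, hqv false z y]
      have hsum : qXZ true z + qXZ false z = 1/2 := by
        cases z
        · rw [vtf, vff]; ring
        · rw [vtt, vft]; ring
      have e : qXZ true z * kY z y + qXZ false z * kY z y = 1/2 * kY z y := by
        linear_combination (kY z y) * hsum
      rw [e]
      cases z <;> cases y <;>
        simp only [Bool.true_eq_false, Bool.false_eq_true, if_true, if_false, reduceIte]
      · rw [hYff]; ring
      · rw [hvc]; ring
      · rw [hYtf]; ring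
      · rw [huc]; ring
    obtain ⟨kx, kw, ky, hkx, hkw, hky, hpeq⟩ := hmark
    have hSz : ∀ z, (∑ x', ∑ w', ∑ y', p x' z w' y') = 1/2 := by
      intro z
      have e : ∀ x', (∑ w', ∑ y', p x' z w' y') = ∑ y', q x' z y' := by
        intro x'
        rw [Finset.sum_comm]
        exact Finset.sum_congr rfl (fun y _ => hmargq x' z y)
      rw [Finset.sum_congr rfl (fun x' _ => e x')]
      exact hS z
    set F : Bool → W → ℝ := fun z w => (1/2) * kw z w with hF
    have hJ : ∀ z w y, (∑ x, p x z w y) = F z w * ky w y := by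
      intro z w y
      have e : ∀ x, p x z w y
          = kx z x * ((∑ x', ∑ w', ∑ y', p x' z w' y') * kw z w * ky w y) := by
        intro x; rw [hpeq x z w y]; ring
      rw [Finset.sum_congr rfl (fun x _ => e x), ← Finset.sum_mul, (hkx z).2, hSz z]
      simp only [hF]
      ring
    have hmcond : ∀ z y, (∑ w, F z w * ky w y)
        = (if z = y then (1 - 2*γ*(1-γ))/2 else (2*γ*(1-γ))/2) := by
      intro z y
      have e : (∑ w, F z w * ky w y) = ∑ w, ∑ x, p x z w y :=
        Finset.sum_congr rfl (fun w _ => (hJ z w y).symm)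
      rw [e, Finset.sum_comm]
      have e2 : (∑ x, ∑ w, p x z w y) = ∑ x, q x z y :=
        Finset.sum_congr rfl (fun x _ => hmargq x z y)
      rw [e2, hqZY z y, hγc]
    have hcore := converse_core hγ0 hγ12 F ky
      (fun z w => mul_nonneg (by norm_num) ((hkw z).1 w))
      (fun w y => (hky w).1 y)
      (fun w => by have h5 := (hky w).2; rw [Fintype.sum_bool] at h5; exact h5)
      hmcond
    have hfun : (fun (zy : Bool × Bool) w => ∑ x, p x zy.1 w zy.2)
        = (fun zy w => F zy.1 w * ky w zy.2) := by
      funext zy w; exact hJ zy.1 w zy.2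
    rw [hfun] at hMI2'
    rw [hγc] at hcore
    rw [hCst]
    linarith only [hcore, hMI2']
  -- Nonemptiness of the dcs region
  have hDne : {R : ℝ | ∃ q : Bool → Bool → Bool → ℝ,
      Compatible qXZ qXY q ∧ (R, Rc) ∈ Sdcs q}.Nonempty := by
    obtain ⟨q, hqc⟩ := hfeas
    obtain ⟨hqXZm, hqXYm, kX, kY, hkX, hkY, hqeq⟩ := hqc
    have hS : ∀ z, (∑ x', ∑ y', q x' z y') = 1/2 := by
      intro z
      have e : (∑ x', ∑ y', q x' z y') = ∑ x', qXZ x' z :=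
        Finset.sum_congr rfl (fun x _ => hqXZm x z)
      rw [e, Fintype.sum_bool]
      cases z
      · linarith only [hZf]
      · linarith only [hZt]
    have hq0 : ∀ x z y, 0 ≤ q x z y := by
      intro x z y
      rw [hqeq x z y, hS z]
      exact mul_nonneg (mul_nonneg (by norm_num) ((hkX z).1 x)) ((hkY z).1 y)
    set p : Bool → Bool → Bool → Bool → ℝ :=
      fun x z w y => if w = z then q x z y else 0 with hp
    have e1 : ∀ x z y, (∑ w, p x z w y) = q x z y := by
      intro x z y
      rw [Fintype.sum_bool]
      simp only [hp]
      cases z <;> simp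
    have e2 : ∀ x z, (∑ w, ∑ y, p x z w y) = ∑ y, q x z y := by
      intro x z
      rw [Finset.sum_comm]
      exact Finset.sum_congr rfl (fun y _ => e1 x z y)
    set MI1 := MI (fun z w => ∑ x, ∑ y, p x z w y) with hMI1d
    set MI2 := MI (fun (zy : Bool × Bool) w => ∑ x, p x zy.1 w zy.2) with hMI2d
    refine ⟨max 0 (max MI1 MI2), q, ⟨hqXZm, hqXYm, kX, kY, hkX, hkY, hqeq⟩, ?_⟩
    refine ⟨le_max_left 0 _, hRc0, Bool, inferInstance, by norm_num [Fintype.card_bool],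
      p, ?_, e1, ?_, ?_, ?_⟩
    · constructor
      · intro s'
        simp only [hp]
        split
        · exact hq0 _ _ _
        · exact le_refl 0
      · simp only [Fintype.sum_prod_type]
        calc (∑ x, ∑ z, ∑ w, ∑ y, p x z w y)
            = ∑ x, ∑ z, ∑ y, q x z y :=
              Finset.sum_congr rfl fun x _ => Finset.sum_congr rfl fun z _ => e2 x z
          _ = ∑ x, ∑ z, qXZ x z :=
              Finset.sum_congr rfl fun x _ => Finset.sum_congr rfl fun z _ => hqXZm x z
          _ = 1 := by
              have h6 := hqXZ.2
              rw [Fintype.sum_prod_type] at h6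
              exact h6
    · refine ⟨kX, fun z w => if w = z then 1 else 0, kY, hkX, ?_, hkY, ?_⟩
      · intro z
        constructor
        · intro w
          dsimp only
          split
          · norm_num
          · exact le_refl 0
        · rw [Fintype.sum_bool]
          cases z <;> simp
      · intro x z w y
        have hSz : (∑ x', ∑ w', ∑ y', p x' z w' y') = 1/2 := by
          have e : ∀ x', (∑ w', ∑ y', p x' z w' y') = ∑ y', q x' z y' := fun x' => e2 x' z
          rw [Finset.sum_congr rfl (fun x' _ => e x')]
          exact hS z
        rw [hSz]
        simp only [hp]
        by_cases hwz : w = z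
        · rw [if_pos hwz, if_pos hwz, hwz, hqeq x z y, hS z]
          ring
        · rw [if_neg hwz, if_neg hwz]
          ring
    · exact le_trans (le_max_left MI1 MI2) (le_max_right 0 (max MI1 MI2))
    · exact le_trans (le_trans (le_max_right MI1 MI2) (le_max_right 0 (max MI1 MI2)))
        (by linarith only [hRc0])
  calc sInf {R : ℝ | (R, Rc) ∈ Srcs qXZ qXY}
      ≤ Rst := csInf_le ⟨0, fun R hR => hR.1⟩ hach
    _ < Cst - Rc := by linarith
    _ ≤ sInf {R : ℝ | ∃ q : Bool → Bool → Bool → ℝ,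
        Compatible qXZ qXY q ∧ (R, Rc) ∈ Sdcs q} := le_csInf hDne hconv

end RCS
end

section
/- Reduction to zero common randomness: suppose min{ R : (R,0) ∈ ∪_{q_{X,Z,Y}} S^{d.c.s.}(q_{X,Z,Y}) } − min{ R : (R,0) ∈ S^{r.c.s.} } = r > 0. Then for every R_c ∈ (0, r): min{ R : (R,R_c) ∈ ∪_{q_{X,Z,Y}} S^{d.c.s.}(q_{X,Z,Y}) } > min{ R : (R,R_c) ∈ S^{r.c.s.} }, where the union is over all distributions q_{X,Z,Y} compatible with (q_{X,Z}, q_{X,Y}). -/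
/-!
Both regions constrain only `R` and `R + R_c` from below, so common randomness can always be
traded for communication: `(R, R_c) ∈ S^{d.c.s.}` gives `(R + R_c, 0) ∈ S^{d.c.s.}`, while
`S^{r.c.s.}` only grows with `R_c`. Hence
`min_dcs(R_c) ≥ min_dcs(0) − R_c = min_rcs(0) + r − R_c > min_rcs(0) ≥ min_rcs(R_c)`.
-/

open scoped BigOperators
open Filter

namespace RCS

theorem mem_Srcs_of_le {X Z Y : Type*} [Fintype X] [Fintype Z] [Fintype Y]
    {qXZ : X → Z → ℝ} {qXY : X → Y → ℝ} {R Rc R' Rc' : ℝ}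
    (h : (R, Rc) ∈ Srcs qXZ qXY) (hR : R ≤ R') (hRc' : 0 ≤ Rc') (hsum : R + Rc ≤ R' + Rc') :
    (R', Rc') ∈ Srcs qXZ qXY := by
  obtain ⟨hR0, -, W, hW, hcard, p, hp, hXZ, hXY, hmk, hIZW, hIXYW⟩ := h
  exact ⟨hR0.trans hR, hRc', W, hW, hcard, p, hp, hXZ, hXY, hmk,
    hIZW.trans hR, hIXYW.trans hsum⟩

theorem mem_Sdcs_of_le {X Z Y : Type*} [Fintype X] [Fintype Z] [Fintype Y]
    {q : X → Z → Y → ℝ} {R Rc R' Rc' : ℝ}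
    (h : (R, Rc) ∈ Sdcs q) (hR : R ≤ R') (hRc' : 0 ≤ Rc') (hsum : R + Rc ≤ R' + Rc') :
    (R', Rc') ∈ Sdcs q := by
  obtain ⟨hR0, -, W, hW, hcard, p, hp, hmarg, hmk, hIZW, hIZYW⟩ := h
  exact ⟨hR0.trans hR, hRc', W, hW, hcard, p, hp, hmarg, hmk,
    hIZW.trans hR, hIZYW.trans hsum⟩

theorem nonneg_of_mem_Sdcs {X Z Y : Type*} [Fintype X] [Fintype Z] [Fintype Y]
    {q : X → Z → Y → ℝ} {R Rc : ℝ} (h : (R, Rc) ∈ Sdcs q) : 0 ≤ R ∧ 0 ≤ Rc :=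
  ⟨h.1, h.2.1⟩

section Slices

variable {X Z Y : Type*} [Fintype X] [Fintype Z] [Fintype Y]

def rcsSlice (qXZ : X → Z → ℝ) (qXY : X → Y → ℝ) (Rc : ℝ) : Set ℝ :=
  {R : ℝ | (R, Rc) ∈ Srcs qXZ qXY}

def dcsSlice (qXZ : X → Z → ℝ) (qXY : X → Y → ℝ) (Rc : ℝ) : Set ℝ :=
  {R : ℝ | ∃ q : X → Z → Y → ℝ, Compatible qXZ qXY q ∧ (R, Rc) ∈ Sdcs q}

variable {qXZ : X → Z → ℝ} {qXY : X → Y → ℝ}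

theorem bddBelow_rcsSlice (Rc : ℝ) : BddBelow (rcsSlice qXZ qXY Rc) :=
  ⟨0, fun _ hR => hR.1⟩

theorem bddBelow_dcsSlice (Rc : ℝ) : BddBelow (dcsSlice qXZ qXY Rc) :=
  ⟨0, fun _ ⟨_, _, hR⟩ => hR.1⟩

theorem rcsSlice_zero_subset {Rc : ℝ} (hRc : 0 ≤ Rc) :
    rcsSlice qXZ qXY 0 ⊆ rcsSlice qXZ qXY Rc :=
  fun _ hR => mem_Srcs_of_le hR le_rfl hRc (by linarith)

theorem dcsSlice_zero_subset {Rc : ℝ} (hRc : 0 ≤ Rc) :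
    dcsSlice qXZ qXY 0 ⊆ dcsSlice qXZ qXY Rc :=
  fun _ ⟨q, hq, hR⟩ => ⟨q, hq, mem_Sdcs_of_le hR le_rfl hRc (by linarith)⟩

theorem add_mem_dcsSlice_zero {R Rc : ℝ} (h : R ∈ dcsSlice qXZ qXY Rc) :
    R + Rc ∈ dcsSlice qXZ qXY 0 := by
  obtain ⟨q, hq, hR⟩ := h
  exact ⟨q, hq, mem_Sdcs_of_le hR (le_add_of_nonneg_right (nonneg_of_mem_Sdcs hR).2) le_rfl
    (add_zero _).ge⟩

theorem sInf_rcsSlice_le_sInf_rcsSlice_zero {Rc : ℝ} (hRc : 0 ≤ Rc)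
    (hne : (rcsSlice qXZ qXY 0).Nonempty) :
    sInf (rcsSlice qXZ qXY Rc) ≤ sInf (rcsSlice qXZ qXY 0) :=
  csInf_le_csInf (bddBelow_rcsSlice Rc) hne (rcsSlice_zero_subset hRc)

theorem sInf_dcsSlice_zero_le_sInf_dcsSlice_add {Rc : ℝ}
    (hne : (dcsSlice qXZ qXY Rc).Nonempty) :
    sInf (dcsSlice qXZ qXY 0) ≤ sInf (dcsSlice qXZ qXY Rc) + Rc := by
  rw [← sub_le_iff_le_add]
  exact le_csInf hne fun R hR => sub_le_iff_le_add.mpr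
    (csInf_le (bddBelow_dcsSlice 0) (add_mem_dcsSlice_zero hR))

end Slices

theorem reduction_to_zero_common_randomness_general
    {X Z Y : Type*} [Fintype X] [Fintype Z] [Fintype Y]
    (qXZ : X → Z → ℝ) (qXY : X → Y → ℝ)
    (r : ℝ)
    (hne_dcs : {R : ℝ | ∃ q : X → Z → Y → ℝ,
        Compatible qXZ qXY q ∧ (R, (0 : ℝ)) ∈ Sdcs q}.Nonempty)
    (hne_rcs : {R : ℝ | (R, (0 : ℝ)) ∈ Srcs qXZ qXY}.Nonempty)
    (hgap : sInf {R : ℝ | ∃ q : X → Z → Y → ℝ,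
          Compatible qXZ qXY q ∧ (R, (0 : ℝ)) ∈ Sdcs q}
        - sInf {R : ℝ | (R, (0 : ℝ)) ∈ Srcs qXZ qXY} = r) :
    ∀ Rc ∈ Set.Ioo (0 : ℝ) r,
      sInf {R : ℝ | (R, Rc) ∈ Srcs qXZ qXY} <
        sInf {R : ℝ | ∃ q : X → Z → Y → ℝ,
          Compatible qXZ qXY q ∧ (R, Rc) ∈ Sdcs q} := by
  rintro Rc ⟨hRc0, hRcr⟩
  have hrcs := sInf_rcsSlice_le_sInf_rcsSlice_zero hRc0.le hne_rcs
  have hdcs := sInf_dcsSlice_zero_le_sInf_dcsSlice_add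
    (hne_dcs.mono (dcsSlice_zero_subset (qXZ := qXZ) (qXY := qXY) hRc0.le))
  change sInf (dcsSlice qXZ qXY 0) - sInf (rcsSlice qXZ qXY 0) = r at hgap
  change sInf (rcsSlice qXZ qXY Rc) < sInf (dcsSlice qXZ qXY Rc)
  linarith

/-- Reduction to zero common randomness: suppose
`min{R : (R,0) ∈ ∪ S^{d.c.s.}} − min{R : (R,0) ∈ S^{r.c.s.}} = r > 0` (with both
slice sets nonempty). Then for every `R_c ∈ (0,r)`,
`min{R : (R,R_c) ∈ ∪ S^{d.c.s.}} > min{R : (R,R_c) ∈ S^{r.c.s.}}`, the union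
being over all distributions `q_{X,Z,Y}` compatible with `(q_{X,Z},q_{X,Y})`. -/
theorem reduction_to_zero_common_randomness
    {X Z Y : Type*} [Fintype X] [Fintype Z] [Fintype Y]
    (qXZ : X → Z → ℝ) (qXY : X → Y → ℝ)
    (hqXZ : IsPMF (fun s : X × Z => qXZ s.1 s.2))
    (hqXY : IsPMF (fun s : X × Y => qXY s.1 s.2))
    (r : ℝ) (hr : 0 < r)
    (hne_dcs : {R : ℝ | ∃ q : X → Z → Y → ℝ,
        Compatible qXZ qXY q ∧ (R, (0 : ℝ)) ∈ Sdcs q}.Nonempty)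
    (hne_rcs : {R : ℝ | (R, (0 : ℝ)) ∈ Srcs qXZ qXY}.Nonempty)
    (hgap : sInf {R : ℝ | ∃ q : X → Z → Y → ℝ,
          Compatible qXZ qXY q ∧ (R, (0 : ℝ)) ∈ Sdcs q}
        - sInf {R : ℝ | (R, (0 : ℝ)) ∈ Srcs qXZ qXY} = r) :
    ∀ Rc ∈ Set.Ioo (0 : ℝ) r,
      sInf {R : ℝ | (R, Rc) ∈ Srcs qXZ qXY} <
        sInf {R : ℝ | ∃ q : X → Z → Y → ℝ,
          Compatible qXZ qXY q ∧ (R, Rc) ∈ Sdcs q} :=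
  reduction_to_zero_common_randomness_general qXZ qXY r hne_dcs hne_rcs hgap

end RCS
end

section
/- Let α < β be reals and f : (α,β) → ℝ a concave, strictly increasing function. Let a, b, c, d ∈ (α,β) satisfy a < min(b,c), d > max(b,c), and b + c > a + d. Then −f(a) + f(b) + f(c) − f(d) > 0. -/
lemma key_four_point
    (α β : ℝ) (f : ℝ → ℝ)
    (hconc : ConcaveOn ℝ (Set.Ioo α β) f)
    (hmono : StrictMonoOn f (Set.Ioo α β))
    (a b c d : ℝ)
    (ha : a ∈ Set.Ioo α β) (hb : b ∈ Set.Ioo α β)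
    (hc : c ∈ Set.Ioo α β) (hd : d ∈ Set.Ioo α β)
    (hab : a < b) (hbc : b ≤ c) (hcd : c < d) (h3 : a + d < b + c) :
    f a + f d < f b + f c := by
  set s1 := (f b - f a) / (b - a) with hs1
  set s2 := (f d - f c) / (d - c) with hs2
  have hba : (0:ℝ) < b - a := by linarith
  have hdc : (0:ℝ) < d - c := by linarith
  have hs2pos : 0 < s2 := div_pos (by linarith [hmono hc hd hcd]) hdc
  have hs21 : s2 ≤ s1 := by
    rcases eq_or_lt_of_le hbc with h | h
    · subst h
      exact hconc.slope_anti_adjacent ha hd hab hcd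
    · calc s2 ≤ (f c - f b) / (c - b) := hconc.slope_anti_adjacent hb hd h hcd
        _ ≤ s1 := hconc.slope_anti_adjacent ha hc hab h
  have h1 : f d - f c = s2 * (d - c) := by rw [hs2]; exact (div_mul_cancel₀ _ hdc.ne').symm
  have h2 : f b - f a = s1 * (b - a) := by rw [hs1]; exact (div_mul_cancel₀ _ hba.ne').symm
  have hlt : d - c < b - a := by linarith
  nlinarith [mul_lt_mul_of_pos_left hlt hs2pos, mul_le_mul_of_nonneg_right hs21 hba.le]

/-- let `α < β` be reals and `f : (α,β) → ℝ` a concave,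
strictly increasing function. Let `a, b, c, d ∈ (α,β)` satisfy `a < min b c`,
`d > max b c`, and `b + c > a + d`. Then `−f(a) + f(b) + f(c) − f(d) > 0`. -/
theorem concave_four_point_inequality
    (α β : ℝ) (hαβ : α < β) (f : ℝ → ℝ)
    (hconc : ConcaveOn ℝ (Set.Ioo α β) f)
    (hmono : StrictMonoOn f (Set.Ioo α β))
    (a b c d : ℝ)
    (ha : a ∈ Set.Ioo α β) (hb : b ∈ Set.Ioo α β)
    (hc : c ∈ Set.Ioo α β) (hd : d ∈ Set.Ioo α β)
    (h1 : a < min b c) (h2 : max b c < d) (h3 : a + d < b + c) :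
    0 < -f a + f b + f c - f d := by
  rcases le_total b c with h | h
  · have := key_four_point α β f hconc hmono a b c d ha hb hc hd
      (lt_of_lt_of_le h1 (min_le_left _ _)) h
      (lt_of_le_of_lt (le_max_right b c) h2) h3
    linarith
  · have := key_four_point α β f hconc hmono a c b d ha hc hb hd
      (lt_of_lt_of_le h1 (min_le_right _ _)) h
      (lt_of_le_of_lt (le_max_left b c) h2) (by linarith)
    linarith
end

section
/- For all reals θ ∈ (0, 1/2) and τ ∈ (0, 1/2): h(θ) + h( 1/2 − (1/2 − τ)·√(1 − 2θ) ) − h( 1/2 − (1/2)·√(1 − 2θ) ) − h( τ + (1 − 2τ)·θ ) > 0. -/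
/-! With `s = √(1 - 2θ)` we have `θ = 1/2 - s²/2` and `τ + (1 - 2τ)θ = 1/2 - (1/2 - τ)s²`, so the
claim says that `F ε = h(1/2 - ε s) - h(1/2 - ε s²)` satisfies `F (1/2 - τ) > F (1/2)`.
`F` is strictly decreasing on `[0, 1/2]`: with `g u = log (1/2 + u) - log (1/2 - u)`, which is
increasing and vanishes at `0`, we get `F' ε = s² g(ε s²) - s g(ε s) < 0` because `s² < s`. -/

/-- The binary entropy function `h(x) = −x·log x − (1−x)·log(1−x)` (natural log). -/
noncomputable def binEnt (x : ℝ) : ℝ :=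
  -x * Real.log x - (1 - x) * Real.log (1 - x)

open Real Set

lemma binEnt_eq_binEntropy (x : ℝ) : binEnt x = binEntropy x := by
  simp only [binEnt, binEntropy, log_inv]
  ring

lemma log_half_add_sub_log_half_sub_strictMonoOn :
    StrictMonoOn (fun u : ℝ => log (1 / 2 + u) - log (1 / 2 - u)) (Ico 0 (1 / 2)) := by
  rintro u ⟨hu0, hu1⟩ v ⟨-, hv1⟩ huv
  have hplus : log (1 / 2 + u) < log (1 / 2 + v) := log_lt_log (by linarith) (by linarith)
  have hminus : log (1 / 2 - v) < log (1 / 2 - u) := log_lt_log (by linarith) (by linarith)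
  simp only
  linarith

lemma hasDerivAt_binEntropy_half_sub_mul {c ε : ℝ} (h : |ε * c| < 1 / 2) :
    HasDerivAt (fun x => binEntropy (1 / 2 - x * c))
      (-c * (log (1 / 2 + ε * c) - log (1 / 2 - ε * c))) ε := by
  obtain ⟨hlo, hhi⟩ := abs_lt.mp h
  have hinner : HasDerivAt (fun x : ℝ => 1 / 2 - x * c) (-c) ε := by
    simpa using ((hasDerivAt_id ε).mul_const c).const_sub (1 / 2 : ℝ)
  refine ((hasDerivAt_binEntropy (by linarith) (by linarith)).comp ε hinner).congr_deriv ?_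
  rw [show (1 : ℝ) - (1 / 2 - ε * c) = 1 / 2 + ε * c by ring]
  ring

lemma binEntropy_half_sub_mul_sub_strictAntiOn {a b : ℝ} (ha : 0 ≤ a) (hab : a < b)
    (hb : b ≤ 1) :
    StrictAntiOn (fun ε => binEntropy (1 / 2 - ε * b) - binEntropy (1 / 2 - ε * a))
      (Icc 0 (1 / 2)) := by
  set g : ℝ → ℝ := fun u => log (1 / 2 + u) - log (1 / 2 - u)
  apply strictAntiOn_of_hasDerivWithinAt_neg (convex_Icc 0 (1 / 2)) (by fun_prop)
    (f' := fun ε => -b * g (ε * b) - -a * g (ε * a))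
  · intro ε hε
    rw [interior_Icc] at hε
    obtain ⟨hε0, hε1⟩ := hε
    refine HasDerivAt.hasDerivWithinAt (HasDerivAt.sub ?_ ?_) <;>
      refine hasDerivAt_binEntropy_half_sub_mul (abs_lt.mpr ⟨?_, ?_⟩) <;> nlinarith
  · intro ε hε
    rw [interior_Icc] at hε
    obtain ⟨hε0, hε1⟩ := hε
    have hεa : ε * a ∈ Ico (0 : ℝ) (1 / 2) := ⟨by positivity, by nlinarith⟩
    have hεb : ε * b ∈ Ico (0 : ℝ) (1 / 2) := ⟨by nlinarith, by nlinarith⟩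
    have hg0 : g 0 = 0 := by simp [g]
    have hgb : 0 < g (ε * b) :=
      hg0 ▸ log_half_add_sub_log_half_sub_strictMonoOn ⟨le_rfl, by norm_num⟩ hεb (by nlinarith)
    have hgab : g (ε * a) ≤ g (ε * b) :=
      log_half_add_sub_log_half_sub_strictMonoOn.monotoneOn hεa hεb (by nlinarith)
    calc -b * g (ε * b) - -a * g (ε * a) ≤ -b * g (ε * b) + a * g (ε * b) := by nlinarith
      _ = -(b - a) * g (ε * b) := by ring
      _ < 0 := by nlinarith

/-- for all reals `θ ∈ (0,1/2)` and `τ ∈ (0,1/2)`: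
`h(θ) + h(1/2 − (1/2 − τ)·√(1 − 2θ)) − h(1/2 − (1/2)·√(1 − 2θ)) − h(τ + (1 − 2τ)·θ) > 0`. -/
theorem binary_entropy_gap_positive
    (θ τ : ℝ) (hθ : θ ∈ Set.Ioo (0 : ℝ) (1 / 2)) (hτ : τ ∈ Set.Ioo (0 : ℝ) (1 / 2)) :
    0 < binEnt θ + binEnt (1 / 2 - (1 / 2 - τ) * Real.sqrt (1 - 2 * θ))
        - binEnt (1 / 2 - (1 / 2) * Real.sqrt (1 - 2 * θ))
        - binEnt (τ + (1 - 2 * τ) * θ) := by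
  obtain ⟨hθ0, hθ1⟩ := hθ
  obtain ⟨hτ0, hτ1⟩ := hτ
  set s := √(1 - 2 * θ)
  have hs0 : 0 < s := sqrt_pos.mpr (by linarith)
  have hs1 : s < 1 := (sqrt_lt' one_pos).mpr (by linarith)
  have hss : s ^ 2 = 1 - 2 * θ := sq_sqrt (by linarith)
  have hdecr := binEntropy_half_sub_mul_sub_strictAntiOn (a := s ^ 2) (b := s) (sq_nonneg s)
    (by nlinarith) hs1.le
    (⟨by linarith, by linarith⟩ : 1 / 2 - τ ∈ Icc (0 : ℝ) (1 / 2))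
    (⟨by linarith, le_rfl⟩ : (1 / 2 : ℝ) ∈ Icc (0 : ℝ) (1 / 2)) (by linarith)
  have hθ_eq : 1 / 2 - 1 / 2 * s ^ 2 = θ := by rw [hss]; ring
  have hmix_eq : 1 / 2 - (1 / 2 - τ) * s ^ 2 = τ + (1 - 2 * τ) * θ := by rw [hss]; ring
  simp only [hθ_eq, hmix_eq] at hdecr
  simp only [binEnt_eq_binEntropy]
  linarith
end

section
/- Compatibility of the limiting single-letter kernels: let q_{X,Z} be a distribution on 𝒳×𝒵 and q_{X,Y} a distribution on 𝒳×𝒴, with 𝒳, 𝒵, 𝒴 finite. For each n, let P^{(n)} be a distribution on 𝒳^n×𝒵^n×𝒴^n such that P^{(n)}_{X^n,Z^n} = q_{X,Z}^{⊗n} and P^{(n)} satisfies the Markov chain X^n − Z^n − Y^n (i.e., P^{(n)}(x^n,z^n,y^n) = P^{(n)}_{Z^n,Y^n}(z^n,y^n)·∏_{t=1}^n q_{X|Z}(x_t|z_t)). Suppose ‖P^{(n)}_{X^n,Y^n} − q_{X,Y}^{⊗n}‖_TV → 0 and there is a sequence (ρ^{(t)}_{Y|Z})_{t≥1} of conditional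 probability kernels from 𝒵 to 𝒴 with ‖P^{(n)}_{Z^n,Y^n} − ∏_{t=1}^n (q_Z·ρ^{(t)}_{Y|Z})‖_TV → 0 as n → ∞. Then for every t ≥ 1, the kernel ρ^{(t)}_{Y|Z} is compatible with (q_{X,Z}, q_{X,Y}), i.e., for all (x,y) ∈ 𝒳×𝒴, ∑_{z∈𝒵} q_Z(z)·q_{X|Z}(x|z)·ρ^{(t)}_{Y|Z}(y|z) = q_{X,Y}(x,y). -/
open scoped BigOperators
open Filter

namespace RCS

/-! Fix `t < n` and test both TV limits against the indicator of `(X_t, Y_t) = (x, y)`.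
Under `q_{X,Y}^{⊗n}` its mean is `q_{X,Y}(x, y)`. Under `P^{(n)}` the Markov chain lets one
average out `X^n` through the channel `q_{X|Z}`, which turns it into the test function
`1{Y_t = y} · q_{X|Z}(x | Z_t)` of `(Z^n, Y^n)`, with values in `[0, 1]`; its mean under
`∏_s (q_Z·ρ^{(s)})` is `∑_z q_Z(z) q_{X|Z}(x | z) ρ^{(t)}(y | z)`. A test function bounded by `1`
moves by at most twice the TV distance, so the two numbers differ by at most
`2 (TV₁(n) + TV₂(n)) → 0`. -/

open Finset

section ProductSums

variable {ι α β R : Type*} [Fintype ι] [DecidableEq ι] [Fintype α] [Fintype β] [CommSemiring R]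

theorem sum_apply_mul_prod_of_sum_eq_one (F : ι → α → R) (i : ι)
    (hF : ∀ j ≠ i, ∑ a, F j a = 1) (g : α → R) :
    ∑ f : ι → α, g (f i) * ∏ j, F j (f j) = ∑ a, g a * F i a := by
  let G : ι → α → R := fun j a => (if j = i then g a else 1) * F j a
  have hG : ∀ f : ι → α, g (f i) * ∏ j, F j (f j) = ∏ j, G j (f j) := fun f => by
    simp only [G, prod_mul_distrib, prod_ite_eq', mem_univ, if_true]
  calc ∑ f : ι → α, g (f i) * ∏ j, F j (f j) = ∏ j, ∑ a, G j a := by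
        simp_rw [hG, prod_univ_sum, Fintype.piFinset_univ]
    _ = ∑ a, G i a := Fintype.prod_eq_single i fun j hj => by simp [G, hj, hF j hj]
    _ = ∑ a, g a * F i a := by simp [G]

theorem sum_apply_mul_prod_prod_of_sum_eq_one (F : ι → α → β → R) (i : ι)
    (hF : ∀ j ≠ i, ∑ a, ∑ b, F j a b = 1) (g : α → β → R) :
    ∑ p : (ι → α) × (ι → β), g (p.1 i) (p.2 i) * ∏ j, F j (p.1 j) (p.2 j)
      = ∑ a, ∑ b, g a b * F i a b := by
  rw [← Fintype.sum_equiv (Equiv.arrowProdEquivProdArrow ι (fun _ => α) (fun _ => β)) _ _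
    fun _ => rfl, ← Fintype.sum_prod_type']
  exact sum_apply_mul_prod_of_sum_eq_one (fun j (s : α × β) => F j s.1 s.2) i
    (fun j hj => by rw [Fintype.sum_prod_type', hF j hj]) fun s => g s.1 s.2

theorem sum_apply_mul_of_eq_mul_prod (K : ι → α → R) (hK : ∀ j, ∑ a, K j a = 1 ∨ ∀ a, K j a = 0)
    (p : (ι → α) → R) (hp : ∀ f, p f = (∑ f', p f') * ∏ j, K j (f j)) (i : ι) (g : α → R) :
    ∑ f : ι → α, g (f i) * p f = (∑ a, g a * K i a) * ∑ f, p f := by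
  by_cases hK1 : ∀ j, ∑ a, K j a = 1
  · calc ∑ f : ι → α, g (f i) * p f = (∑ f', p f') * ∑ f : ι → α, g (f i) * ∏ j, K j (f j) := by
          rw [mul_sum]; exact sum_congr rfl fun f _ => by rw [hp f]; ring
      _ = _ := by rw [sum_apply_mul_prod_of_sum_eq_one K i (fun j _ => hK1 j), mul_comm]
  · obtain ⟨j, hj⟩ := not_forall.1 hK1
    have hp0 : ∀ f, p f = 0 := fun f => by
      rw [hp f, prod_eq_zero (mem_univ j) ((hK j).resolve_left hj _), mul_zero]
    simp [hp0]

end ProductSums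

theorem abs_sum_mul_sub_sum_mul_le_two_mul_TV {S : Type*} [Fintype S] (w p q : S → ℝ)
    (hw : ∀ s, |w s| ≤ 1) : |∑ s, w s * p s - ∑ s, w s * q s| ≤ 2 * TV p q := by
  calc |∑ s, w s * p s - ∑ s, w s * q s| = |∑ s, w s * (p s - q s)| := by
        simp only [mul_sub, sum_sub_distrib]
    _ ≤ ∑ s, |w s| * |p s - q s| := by
        simpa only [abs_mul] using abs_sum_le_sum_abs (fun s => w s * (p s - q s)) univ
    _ ≤ ∑ s, |p s - q s| := sum_le_sum fun s _ => mul_le_of_le_one_left (abs_nonneg _) (hw s)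
    _ = 2 * TV p q := by rw [TV]; ring

section Conditional

variable {α γ : Type*} [Fintype α]

/-- The conditional pmf `q_{X|Z}(a | z) = q(a, z) / q_Z(z)`; it vanishes identically when
`q_Z(z) = 0`, because `x / 0 = 0`. -/
noncomputable def condPMF (q : α → γ → ℝ) (z : γ) (a : α) : ℝ :=
  q a z / ∑ a', q a' z

theorem sum_condPMF_eq_one_or (q : α → γ → ℝ) (z : γ) :
    ∑ a, condPMF q z a = 1 ∨ ∀ a, condPMF q z a = 0 := by
  by_cases hz : ∑ a', q a' z = 0
  · exact Or.inr fun a => by rw [condPMF, hz, div_zero]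
  · exact Or.inl <| by simp only [condPMF, ← sum_div, div_self hz]

theorem abs_sum_mul_condPMF_le_one (q : α → γ → ℝ) (hq : ∀ a z, 0 ≤ q a z) (g : α → ℝ)
    (hg : ∀ a, |g a| ≤ 1) (z : γ) : |∑ a, g a * condPMF q z a| ≤ 1 := by
  have hnonneg : ∀ a, 0 ≤ condPMF q z a := fun a =>
    div_nonneg (hq a z) (sum_nonneg fun a' _ => hq a' z)
  calc |∑ a, g a * condPMF q z a| ≤ ∑ a, |g a| * condPMF q z a := by
        simpa only [abs_mul, abs_of_nonneg (hnonneg _)] using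
          abs_sum_le_sum_abs (fun a => g a * condPMF q z a) univ
    _ ≤ ∑ a, condPMF q z a := sum_le_sum fun a _ => mul_le_of_le_one_left (hnonneg a) (hg a)
    _ ≤ 1 := by
        rcases sum_condPMF_eq_one_or q z with h | h
        · exact h.le
        · simp [h]

end Conditional

theorem sum_mul_marginal_eq_of_markov {ι α β γ : Type*} [Fintype ι] [DecidableEq ι] [Fintype α]
    [Fintype β] [Fintype γ] (q : α → γ → ℝ) (p : (ι → α) → (ι → γ) → (ι → β) → ℝ)
    (hp : ∀ xs zs ys, p xs zs ys = (∑ xs', p xs' zs ys) * ∏ j, condPMF q (zs j) (xs j))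
    (i : ι) (g : α → β → ℝ) :
    ∑ xy : (ι → α) × (ι → β), g (xy.1 i) (xy.2 i) * ∑ zs, p xy.1 zs xy.2
      = ∑ zy : (ι → γ) × (ι → β),
          (∑ a, g a (zy.2 i) * condPMF q (zy.1 i) a) * ∑ xs, p xs zy.1 zy.2 := by
  calc ∑ xy : (ι → α) × (ι → β), g (xy.1 i) (xy.2 i) * ∑ zs, p xy.1 zs xy.2
      = ∑ zs, ∑ ys, ∑ xs, g (xs i) (ys i) * p xs zs ys := by
        simp only [Fintype.sum_prod_type, mul_sum]
        rw [sum_comm]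
        exact (sum_congr rfl fun _ _ => sum_comm).trans sum_comm
    _ = _ := by
        rw [Fintype.sum_prod_type]
        exact sum_congr rfl fun zs _ => sum_congr rfl fun ys _ =>
          sum_apply_mul_of_eq_mul_prod _ (fun j => sum_condPMF_eq_one_or q (zs j)) _
            (fun xs => hp xs zs ys) i (fun a => g a (ys i))

theorem abs_sum_mul_condPMF_sub_le_TV {ι X Z Y : Type*} [Fintype ι] [DecidableEq ι] [Fintype X]
    [Fintype Z] [Fintype Y] [DecidableEq X] [DecidableEq Y]
    (qXZ : X → Z → ℝ) (qXY : X → Y → ℝ)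
    (hqXZ : IsPMF (fun s : X × Z => qXZ s.1 s.2)) (hqXY : ∑ s : X × Y, qXY s.1 s.2 = 1)
    (P : (ι → X) → (ι → Z) → (ι → Y) → ℝ)
    (hMarkov : ∀ x z y, P x z y = (∑ x', P x' z y) * ∏ t, condPMF qXZ (z t) (x t))
    (ρ : ι → Z → Y → ℝ) (hρ : ∀ t z, ∑ y, ρ t z y = 1) (i : ι) (x : X) (y : Y) :
    |(∑ z, (∑ x', qXZ x' z) * condPMF qXZ z x * ρ i z y) - qXY x y| ≤
      2 * (TV (fun xy : (ι → X) × (ι → Y) => ∑ z, P xy.1 z xy.2)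
              (fun xy => ∏ t, qXY (xy.1 t) (xy.2 t)) +
           TV (fun zy : (ι → Z) × (ι → Y) => ∑ x, P x zy.1 zy.2)
              (fun zy => ∏ t, (∑ x, qXZ x (zy.1 t)) * ρ t (zy.1 t) (zy.2 t))) := by
  let g : X → Y → ℝ := fun a b => if a = x ∧ b = y then 1 else 0
  have hg : ∀ a b, |g a b| ≤ 1 := fun a b => by by_cases h : a = x ∧ b = y <;> simp [g, h]
  have hqZρ : ∀ t, ∑ a, ∑ b, (∑ x', qXZ x' a) * ρ t a b = 1 := fun t => by
    simp only [← mul_sum, hρ, mul_one]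
    rw [sum_comm, ← hqXZ.2, Fintype.sum_prod_type]
  have hmean_XY : ∑ xy : (ι → X) × (ι → Y), g (xy.1 i) (xy.2 i) * ∏ t, qXY (xy.1 t) (xy.2 t)
      = qXY x y := by
    rw [sum_apply_mul_prod_prod_of_sum_eq_one _ i fun _ _ => by rwa [← Fintype.sum_prod_type']]
    simp [g, ite_and]
  have hmean_ZY : ∑ zy : (ι → Z) × (ι → Y), (∑ a, g a (zy.2 i) * condPMF qXZ (zy.1 i) a) *
        ∏ t, (∑ x, qXZ x (zy.1 t)) * ρ t (zy.1 t) (zy.2 t)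
      = ∑ z, (∑ x', qXZ x' z) * condPMF qXZ z x * ρ i z y := by
    refine (sum_apply_mul_prod_prod_of_sum_eq_one _ i (fun t _ => hqZρ t)
      fun a b => ∑ a', g a' b * condPMF qXZ a a').trans ?_
    simp only [ite_and, ite_mul, one_mul, zero_mul, sum_ite_eq', mem_univ, ↓reduceIte, g]
    exact sum_congr rfl fun z _ => by ring
  have hTV_XY := abs_sum_mul_sub_sum_mul_le_two_mul_TV
    (fun xy : (ι → X) × (ι → Y) => g (xy.1 i) (xy.2 i))
    (fun xy => ∑ z, P xy.1 z xy.2) (fun xy => ∏ t, qXY (xy.1 t) (xy.2 t)) fun xy => hg _ _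
  have hTV_ZY := abs_sum_mul_sub_sum_mul_le_two_mul_TV
    (fun zy : (ι → Z) × (ι → Y) => ∑ a, g a (zy.2 i) * condPMF qXZ (zy.1 i) a)
    (fun zy => ∑ x, P x zy.1 zy.2) (fun zy => ∏ t, (∑ x, qXZ x (zy.1 t)) * ρ t (zy.1 t) (zy.2 t))
    fun zy => abs_sum_mul_condPMF_le_one qXZ (fun a z => hqXZ.1 (a, z)) _ (fun a => hg _ _) _
  rw [hmean_XY, sum_mul_marginal_eq_of_markov qXZ P hMarkov i g] at hTV_XY
  rw [hmean_ZY] at hTV_ZY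
  rw [abs_le] at hTV_XY hTV_ZY ⊢
  constructor <;> linarith [hTV_XY.1, hTV_XY.2, hTV_ZY.1, hTV_ZY.2]

theorem limiting_kernels_compatible_general
    {X Z Y : Type*} [Fintype X] [Fintype Z] [Fintype Y]
    (qXZ : X → Z → ℝ) (qXY : X → Y → ℝ)
    (hqXZ : IsPMF (fun s : X × Z => qXZ s.1 s.2))
    (hqXY : IsPMF (fun s : X × Y => qXY s.1 s.2))
    (P : ∀ n : ℕ, (Fin n → X) → (Fin n → Z) → (Fin n → Y) → ℝ)
    (hMarkov : ∀ n (x : Fin n → X) (z : Fin n → Z) (y : Fin n → Y),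
        P n x z y = (∑ x', P n x' z y) *
          ∏ t, qXZ (x t) (z t) / (∑ x', qXZ x' (z t)))
    (hXY : Tendsto (fun n =>
        TV (fun xy : (Fin n → X) × (Fin n → Y) => ∑ z, P n xy.1 z xy.2)
           (fun xy => ∏ t, qXY (xy.1 t) (xy.2 t))) atTop (nhds 0))
    (ρ : ℕ → Z → Y → ℝ) (hρ : ∀ t, IsKernel (ρ t))
    (hZY : Tendsto (fun n =>
        TV (fun zy : (Fin n → Z) × (Fin n → Y) => ∑ x, P n x zy.1 zy.2)
           (fun zy => ∏ t : Fin n,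
             (∑ x, qXZ x (zy.1 t)) * ρ t.val (zy.1 t) (zy.2 t))) atTop (nhds 0)) :
    ∀ (t : ℕ) (x : X) (y : Y),
      (∑ z, (∑ x', qXZ x' z) * (qXZ x z / (∑ x', qXZ x' z)) * ρ t z y)
        = qXY x y := by
  classical
  intro t x y
  refine sub_eq_zero.1 (abs_nonpos_iff.1 ?_)
  refine (ge_of_tendsto ((hXY.add hZY).const_mul 2) ?_).trans_eq (by rw [add_zero, mul_zero])
  exact (eventually_gt_atTop t).mono fun n hn =>
    abs_sum_mul_condPMF_sub_le_TV qXZ qXY hqXZ hqXY.2 (P n) (hMarkov n)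
      (fun j : Fin n => ρ j) (fun j z => (hρ j z).2) ⟨t, hn⟩ x y

/-- Compatibility of the limiting single-letter kernels: if
`P^{(n)}_{X^n,Z^n} = q_{X,Z}^{⊗n}`, `P^{(n)}` satisfies the Markov chain
`X^n − Z^n − Y^n` through the memoryless channel `q_{X|Z}`,
`‖P^{(n)}_{X^n,Y^n} − q_{X,Y}^{⊗n}‖_TV → 0` and
`‖P^{(n)}_{Z^n,Y^n} − ∏_{t=1}^n (q_Z·ρ^{(t)}_{Y|Z})‖_TV → 0`, then every kernel
`ρ^{(t)}_{Y|Z}` is compatible with `(q_{X,Z},q_{X,Y})`: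
`∑_z q_Z(z)·q_{X|Z}(x|z)·ρ^{(t)}_{Y|Z}(y|z) = q_{X,Y}(x,y)` for all `(x,y)`. -/
theorem limiting_kernels_compatible
    {X Z Y : Type*} [Fintype X] [Fintype Z] [Fintype Y]
    (qXZ : X → Z → ℝ) (qXY : X → Y → ℝ)
    (hqXZ : IsPMF (fun s : X × Z => qXZ s.1 s.2))
    (hqXY : IsPMF (fun s : X × Y => qXY s.1 s.2))
    (P : ∀ n : ℕ, (Fin n → X) → (Fin n → Z) → (Fin n → Y) → ℝ)
    (hP : ∀ n, IsPMF (fun s : (Fin n → X) × (Fin n → Z) × (Fin n → Y) =>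
        P n s.1 s.2.1 s.2.2))
    (hPXZ : ∀ n (x : Fin n → X) (z : Fin n → Z),
        (∑ y, P n x z y) = ∏ t, qXZ (x t) (z t))
    (hMarkov : ∀ n (x : Fin n → X) (z : Fin n → Z) (y : Fin n → Y),
        P n x z y = (∑ x', P n x' z y) *
          ∏ t, qXZ (x t) (z t) / (∑ x', qXZ x' (z t)))
    (hXY : Tendsto (fun n =>
        TV (fun xy : (Fin n → X) × (Fin n → Y) => ∑ z, P n xy.1 z xy.2)
           (fun xy => ∏ t, qXY (xy.1 t) (xy.2 t))) atTop (nhds 0))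
    (ρ : ℕ → Z → Y → ℝ) (hρ : ∀ t, IsKernel (ρ t))
    (hZY : Tendsto (fun n =>
        TV (fun zy : (Fin n → Z) × (Fin n → Y) => ∑ x, P n x zy.1 zy.2)
           (fun zy => ∏ t : Fin n,
             (∑ x, qXZ x (zy.1 t)) * ρ t.val (zy.1 t) (zy.2 t))) atTop (nhds 0)) :
    ∀ (t : ℕ) (x : X) (y : Y),
      (∑ z, (∑ x', qXZ x' z) * (qXZ x z / (∑ x', qXZ x' z)) * ρ t z y)
        = qXY x y :=
  limiting_kernels_compatible_general qXZ qXY hqXZ hqXY P hMarkov hXY ρ hρ hZY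

end RCS
end

section
/- Converse rate bound for the compression rate: let n be a positive integer, 𝒵 a finite alphabet, q_Z a distribution on 𝒵, and let ℳ, 𝒥 be finite sets. Let (Z^n, J, M) be jointly distributed random variables such that Z^n ~ q_Z^{⊗n} (i.i.d.), J is uniform on 𝒥 and independent of Z^n, and M is any random variable jointly distributed with (Z^n, J). Let T be uniform on {1,…,n}, independent of (Z^n, J, M). Then (1/n)·log|ℳ| ≥ I(M, J, T ; Z_T), the mutual information computed under the joint law of (M, J, T, Z_T). -/
open scoped BigOperators
open Filter

namespace RCS

lemma mul_log_le {x y : ℝ} (hx : 0 ≤ x) (hy : 0 < y) : x * Real.log (y / x) ≤ y - x := by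
  rcases eq_or_lt_of_le hx with h | h
  · simp [← h, hy.le]
  · have hpos : 0 < y / x := div_pos hy h
    have h1 := Real.log_le_sub_one_of_pos hpos
    have hx' : x ≠ 0 := ne_of_gt h
    calc x * Real.log (y / x) ≤ x * (y / x - 1) := by nlinarith
      _ = y - x := by field_simp

lemma mul_log_nonpos {x y : ℝ} (hx : 0 ≤ x) (hxy : x ≤ y) : x * Real.log (x / y) ≤ 0 := by
  rcases eq_or_lt_of_le hx with h | h
  · simp [← h]
  · have hy : 0 < y := lt_of_lt_of_le h hxy
    have h1 : x / y ≤ 1 := (div_le_one hy).mpr hxy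
    have hlog : Real.log (x / y) ≤ 0 := Real.log_nonpos (by positivity) h1
    exact mul_nonpos_of_nonneg_of_nonpos hx hlog

lemma sum_prod_eq {n : ℕ} {Z : Type*} [Fintype Z] (g : Fin n → Z → ℝ) :
    ∑ z : Fin n → Z, ∏ t, g t (z t) = ∏ t, ∑ v, g t v := by
  rw [Finset.prod_univ_sum, Fintype.piFinset_univ]

lemma sum_cond_prod {n : ℕ} {Z : Type*} [Fintype Z] [DecidableEq Z]
    (q : Z → ℝ) (hq1 : ∑ v, q v = 1) (t : Fin n) (v : Z) :
    ∑ z : Fin n → Z, (if z t = v then ∏ s, q (z s) else 0) = q v := by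
  classical
  have h1 : ∀ z : Fin n → Z, (if z t = v then ∏ s, q (z s) else 0)
      = ∏ s, (if s = t then (if z s = v then q (z s) else 0) else q (z s)) := by
    intro z
    by_cases h : z t = v
    · rw [if_pos h]
      refine Finset.prod_congr rfl fun s _ => ?_
      by_cases hs : s = t
      · subst hs; simp [h]
      · simp [hs]
    · rw [if_neg h]
      refine (Finset.prod_eq_zero (Finset.mem_univ t) ?_).symm
      simp [h]
  rw [Finset.sum_congr rfl fun z _ => h1 z,
    sum_prod_eq (g := fun s u => if s = t then (if u = v then q u else 0) else q u)]
  have h2 : ∀ s : Fin n, (∑ u, if s = t then (if u = v then q u else 0) else q u)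
      = if s = t then q v else 1 := by
    intro s
    by_cases hs : s = t
    · subst hs
      simp [Finset.sum_ite_eq']
    · simp [hs, hq1]
  rw [Finset.prod_congr rfl fun s _ => h2 s, Finset.prod_ite_eq' Finset.univ t fun _ => q v]
  simp

lemma sum3_comm {A B C : Type*} [Fintype A] [Fintype B] [Fintype C]
    (g : A → B → C → ℝ) :
    ∑ a, ∑ b, ∑ c, g a b c = ∑ c, ∑ b, ∑ a, g a b c := by
  calc ∑ a, ∑ b, ∑ c, g a b c
      = ∑ a, ∑ c, ∑ b, g a b c := Finset.sum_congr rfl fun a _ => Finset.sum_comm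
    _ = ∑ c, ∑ a, ∑ b, g a b c := Finset.sum_comm
    _ = ∑ c, ∑ b, ∑ a, g a b c := Finset.sum_congr rfl fun c _ => Finset.sum_comm

lemma step1core {n : ℕ} {Z : Type*} [Fintype Z] [DecidableEq Z]
    (qZ : Z → ℝ) (hq : ∀ v, 0 ≤ qZ v)
    (f : (Fin n → Z) → ℝ) (hf : ∀ z, 0 ≤ f z)
    (hsupp : ∀ z, 0 < f z → ∀ t, 0 < qZ (z t))
    (a : ℝ) (ha : a = ∑ z, f z)
    (ft : Fin n → Z → ℝ) (hft : ∀ t v, ft t v = ∑ z, if z t = v then f z else 0) :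
    (∑ t, ∑ v, ft t v * Real.log (ft t v / (a * qZ v)))
      ≤ ∑ z, f z * Real.log (f z / (a * ∏ t, qZ (z t))) := by
  classical
  have hann : 0 ≤ a := ha ▸ Finset.sum_nonneg fun z _ => hf z
  have hftnn : ∀ t v, 0 ≤ ft t v := fun t v => (hft t v) ▸
    Finset.sum_nonneg fun z _ => by split <;> simp [hf z]
  have hftmarg : ∀ t, ∑ v, ft t v = a := by
    intro t
    simp only [hft]
    rw [Finset.sum_comm, ha]
    refine Finset.sum_congr rfl fun z _ => ?_
    rw [Finset.sum_ite_eq Finset.univ (z t) fun _ => f z]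
    simp
  have hftge : ∀ z t, f z ≤ ft t (z t) := by
    intro z t
    rw [hft]
    have h0 : f z = if z t = z t then f z else 0 := by simp
    rw [h0]
    exact Finset.single_le_sum
      (f := fun z' => if z' t = z t then f z' else 0)
      (fun z' _ => by split <;> simp [hf z']) (Finset.mem_univ z)
  rcases eq_or_lt_of_le hann with ha0 | hapos
  · have hf0 : ∀ z, f z = 0 := fun z =>
      (Finset.sum_eq_zero_iff_of_nonneg (fun z _ => hf z)).mp (ha ▸ ha0.symm) z (Finset.mem_univ z)
    have hft0 : ∀ t v, ft t v = 0 := fun t v => by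
      rw [hft]; exact Finset.sum_eq_zero fun z _ => by simp [hf0]
    simp [hft0, hf0]
  · -- a > 0
    set Y : (Fin n → Z) → ℝ :=
      fun z => a * ∏ t, (qZ (z t) * (ft t (z t) / (a * qZ (z t)))) with hY
    have hYnn : ∀ z, 0 ≤ Y z := by
      intro z
      refine mul_nonneg hann (Finset.prod_nonneg fun t _ => ?_)
      exact mul_nonneg (hq _) (div_nonneg (hftnn _ _) (mul_nonneg hann (hq _)))
    have hYsum : ∑ z, Y z ≤ a := by
      have h1 : ∀ z : Fin n → Z, Y z ≤ a * ∏ t, (ft t (z t) / a) := by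
        intro z
        refine mul_le_mul_of_nonneg_left (Finset.prod_le_prod (fun t _ => ?_) (fun t _ => ?_)) hann
        · exact mul_nonneg (hq _) (div_nonneg (hftnn _ _) (mul_nonneg hann (hq _)))
        · rcases eq_or_lt_of_le (hq (z t)) with h | h
          · rw [← h]
            simpa using div_nonneg (hftnn t (z t)) hann
          · have hne : qZ (z t) ≠ 0 := ne_of_gt h
            have hane : a ≠ 0 := ne_of_gt hapos
            refine le_of_eq ?_
            field_simp
      have h2 : ∑ z : Fin n → Z, a * ∏ t, (ft t (z t) / a) = a := by
        rw [← Finset.mul_sum, sum_prod_eq (g := fun t v => ft t v / a)]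
        have h3 : ∀ t : Fin n, (∑ v, ft t v / a) = 1 := by
          intro t; rw [← Finset.sum_div, hftmarg, div_self (ne_of_gt hapos)]
        rw [Finset.prod_congr rfl fun t _ => h3 t, Finset.prod_const_one, mul_one]
      calc ∑ z, Y z ≤ ∑ z : Fin n → Z, a * ∏ t, (ft t (z t) / a) :=
            Finset.sum_le_sum fun z _ => h1 z
        _ = a := h2
    -- rewrite LHS
    have hL : (∑ t, ∑ v, ft t v * Real.log (ft t v / (a * qZ v)))
        = ∑ z, f z * ∑ t, Real.log (ft t (z t) / (a * qZ (z t))) := by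
      have h1 : ∀ t, (∑ v, ft t v * Real.log (ft t v / (a * qZ v)))
          = ∑ z, f z * Real.log (ft t (z t) / (a * qZ (z t))) := by
        intro t
        have h2 : ∀ v, ft t v * Real.log (ft t v / (a * qZ v))
            = ∑ z, (if z t = v then f z * Real.log (ft t v / (a * qZ v)) else 0) := by
          intro v
          set L := Real.log (ft t v / (a * qZ v)) with hLdef
          rw [hft, Finset.sum_mul]
          exact Finset.sum_congr rfl fun z _ => by by_cases h : z t = v <;> simp [h]
        rw [Finset.sum_congr rfl fun v _ => h2 v, Finset.sum_comm]
        refine Finset.sum_congr rfl fun z _ => ?_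
        rw [Finset.sum_ite_eq Finset.univ (z t)
          (fun v => f z * Real.log (ft t v / (a * qZ v)))]
        simp
      rw [Finset.sum_congr rfl fun t _ => h1 t, Finset.sum_comm]
      exact Finset.sum_congr rfl fun z _ => (Finset.mul_sum _ _ _).symm
    rw [hL]
    have hterm : ∀ z, f z * (∑ t, Real.log (ft t (z t) / (a * qZ (z t))))
        ≤ f z * Real.log (f z / (a * ∏ t, qZ (z t))) + (Y z - f z) := by
      intro z
      rcases eq_or_lt_of_le (hf z) with h0 | hpos
      · rw [← h0]; simpa using hYnn z
      · have hqt : ∀ t, 0 < qZ (z t) := hsupp z hpos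
        have hftpos : ∀ t : Fin n, 0 < ft t (z t) := fun t => lt_of_lt_of_le hpos (hftge z t)
        have hQpos : 0 < ∏ t, qZ (z t) := Finset.prod_pos fun t _ => hqt t
        have hWpos : 0 < ∏ t, (ft t (z t) / (a * qZ (z t))) :=
          Finset.prod_pos fun t _ => div_pos (hftpos t) (mul_pos hapos (hqt t))
        have hsumlog : (∑ t, Real.log (ft t (z t) / (a * qZ (z t))))
            = Real.log (∏ t, (ft t (z t) / (a * qZ (z t)))) :=
          (Real.log_prod fun t _ =>
            ne_of_gt (div_pos (hftpos t) (mul_pos hapos (hqt t)))).symm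
        have hYz : Y z = a * ((∏ t, qZ (z t)) * ∏ t, (ft t (z t) / (a * qZ (z t)))) := by
          rw [hY]
          simp only
          rw [Finset.prod_mul_distrib]
        have hYpos : 0 < Y z := by rw [hYz]; positivity
        have hfne : f z ≠ 0 := ne_of_gt hpos
        have hlogsplit : Real.log (∏ t, (ft t (z t) / (a * qZ (z t))))
            = Real.log (Y z / f z) + Real.log (f z / (a * ∏ t, qZ (z t))) := by
          rw [← Real.log_mul (div_pos hYpos hpos).ne' (div_pos hpos (mul_pos hapos hQpos)).ne']
          congr 1
          have hassoc : a * ((∏ t, qZ (z t)) * (∏ t, (ft t (z t) / (a * qZ (z t)))))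
              = (a * ∏ t, qZ (z t)) * ∏ t, (ft t (z t) / (a * qZ (z t))) := by ring
          rw [div_mul_div_comm, mul_comm (Y z) (f z), mul_div_mul_left _ _ hfne, hYz,
            hassoc, mul_div_cancel_left₀ _ (ne_of_gt (mul_pos hapos hQpos))]
        rw [hsumlog, hlogsplit, mul_add]
        have hkey := mul_log_le (hf z) hYpos
        linarith
    calc ∑ z, f z * ∑ t, Real.log (ft t (z t) / (a * qZ (z t)))
        ≤ ∑ z, (f z * Real.log (f z / (a * ∏ t, qZ (z t))) + (Y z - f z)) :=
          Finset.sum_le_sum fun z _ => hterm z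
      _ = (∑ z, f z * Real.log (f z / (a * ∏ t, qZ (z t)))) + ((∑ z, Y z) - a) := by
          rw [Finset.sum_add_distrib, Finset.sum_sub_distrib, ha]
      _ ≤ _ := by linarith

/-- Converse rate bound for the compression rate: if
`Z^n ~ q_Z^{⊗n}`, `J` is uniform on `𝒥` and independent of `Z^n`, `M` is
arbitrary jointly distributed, and `T` is uniform on `{1,…,n}` independent of
everything, then `(1/n)·log|ℳ| ≥ I(M,J,T ; Z_T)`. -/
theorem converse_compression_rate_bound
    (n : ℕ) (hn : 0 < n)
    {Z J M : Type*} [Fintype Z] [Fintype J] [Fintype M] [DecidableEq Z]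
    (qZ : Z → ℝ) (hqZ : IsPMF qZ)
    (P : (Fin n → Z) → J → M → ℝ)
    (hP : IsPMF (fun s : (Fin n → Z) × J × M => P s.1 s.2.1 s.2.2))
    (hZJ : ∀ (z : Fin n → Z) (j : J),
        (∑ m, P z j m) = (∏ t, qZ (z t)) * ((Fintype.card J : ℝ))⁻¹) :
    MI (fun (mjt : M × J × Fin n) (zv : Z) =>
        ((n : ℝ))⁻¹ * ∑ z : Fin n → Z,
          (if z mjt.2.2 = zv then P z mjt.2.1 mjt.1 else 0))
      ≤ Real.log (Fintype.card M) / n := by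
  classical
  obtain ⟨hq, hq1⟩ := hqZ
  obtain ⟨hPnn', hPsum⟩ := hP
  have hPnn : ∀ z j m, 0 ≤ P z j m := fun z j m => hPnn' (z, j, m)
  have hnR : (0:ℝ) < (n:ℝ) := by exact_mod_cast hn
  have hJ0 : 0 < Fintype.card J := by
    rcases Nat.eq_zero_or_pos (Fintype.card J) with h | h
    · exfalso
      have hJE : IsEmpty J := Fintype.card_eq_zero_iff.mp h
      have he : (Finset.univ : Finset ((Fin n → Z) × J × M)) = ∅ := Finset.univ_eq_empty
      rw [he, Finset.sum_empty] at hPsum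
      exact one_ne_zero hPsum.symm
    · exact h
  have hM0 : 0 < Fintype.card M := by
    rcases Nat.eq_zero_or_pos (Fintype.card M) with h | h
    · exfalso
      have hME : IsEmpty M := Fintype.card_eq_zero_iff.mp h
      have he : (Finset.univ : Finset ((Fin n → Z) × J × M)) = ∅ := Finset.univ_eq_empty
      rw [he, Finset.sum_empty] at hPsum
      exact one_ne_zero hPsum.symm
    · exact h
  have hJR : (0:ℝ) < (Fintype.card J : ℝ) := by exact_mod_cast hJ0
  have hMR : (0:ℝ) < (Fintype.card M : ℝ) := by exact_mod_cast hM0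
  have hble : ∀ z j m, P z j m ≤ (∏ t, qZ (z t)) * (Fintype.card J : ℝ)⁻¹ := by
    intro z j m
    rw [← hZJ z j]
    exact Finset.single_le_sum (fun m' _ => hPnn z j m') (Finset.mem_univ m)
  have hsupp : ∀ z j m, 0 < P z j m → ∀ t, 0 < qZ (z t) := by
    intro z j m hpos t
    have h1 : 0 < (∏ s, qZ (z s)) * (Fintype.card J : ℝ)⁻¹ := lt_of_lt_of_le hpos (hble z j m)
    have h2 : 0 < ∏ s, qZ (z s) := by
      by_contra hc
      push_neg at hc
      nlinarith [inv_pos.mpr hJR]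
    have h3 : qZ (z t) ≠ 0 := by
      intro h0
      have h4 : (∏ s, qZ (z s)) = 0 := Finset.prod_eq_zero (Finset.mem_univ t) h0
      rw [h4] at h2; exact lt_irrefl 0 h2
    exact lt_of_le_of_ne (hq (z t)) (Ne.symm h3)
  have hPsum' : ∑ z : Fin n → Z, ∑ j, ∑ m, P z j m = 1 := by
    calc ∑ z : Fin n → Z, ∑ j, ∑ m, P z j m
        = ∑ s : (Fin n → Z) × J × M, P s.1 s.2.1 s.2.2 := by
          rw [Fintype.sum_prod_type]
          refine Finset.sum_congr rfl fun z _ => ?_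
          rw [Fintype.sum_prod_type]
      _ = 1 := hPsum
  have hAsum : ∑ m, ∑ j, ∑ z : Fin n → Z, P z j m = 1 := by
    rw [← hPsum']
    exact (sum3_comm fun z j m => P z j m).symm
  -- marginal over v (per (m,j,t))
  have hmargV : ∀ (m : M) (j : J) (t : Fin n),
      (∑ v : Z, ((n:ℝ))⁻¹ * ∑ z : Fin n → Z, (if z t = v then P z j m else 0))
        = ((n:ℝ))⁻¹ * ∑ z : Fin n → Z, P z j m := by
    intro m j t
    rw [← Finset.mul_sum]
    congr 1
    rw [Finset.sum_comm]
    refine Finset.sum_congr rfl fun z _ => ?_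
    rw [Finset.sum_ite_eq Finset.univ (z t) fun _ => P z j m]
    simp
  -- marginal over u
  have hmargU : ∀ v : Z,
      (∑ u : M × J × Fin n, ((n:ℝ))⁻¹ * ∑ z : Fin n → Z,
        (if z u.2.2 = v then P z u.2.1 u.1 else 0)) = qZ v := by
    intro v
    have key : ∀ t : Fin n,
        (∑ j, ∑ m, ∑ z : Fin n → Z, (if z t = v then P z j m else 0)) = qZ v := by
      intro t
      have e2 : ∀ j : J, (∑ m, ∑ z : Fin n → Z, (if z t = v then P z j m else 0))
          = ∑ z : Fin n → Z, (if z t = v then (∏ s, qZ (z s)) * (Fintype.card J : ℝ)⁻¹ else 0) := by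
        intro j
        rw [Finset.sum_comm]
        refine Finset.sum_congr rfl fun z _ => ?_
        by_cases h : z t = v
        · simp only [if_pos h]
          exact hZJ z j
        · simp [if_neg h]
      rw [Finset.sum_congr rfl fun j _ => e2 j, Finset.sum_const, Finset.card_univ,
        nsmul_eq_mul]
      have e3 : ∑ z : Fin n → Z, (if z t = v then (∏ s, qZ (z s)) * (Fintype.card J : ℝ)⁻¹ else 0)
          = (∑ z : Fin n → Z, if z t = v then (∏ s, qZ (z s)) else 0) * (Fintype.card J : ℝ)⁻¹ := by
        rw [Finset.sum_mul]
        exact Finset.sum_congr rfl fun z _ => by by_cases h : z t = v <;> simp [h]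
      rw [e3, sum_cond_prod qZ hq1 t v]
      field_simp
    rw [Fintype.sum_prod_type]
    have e1 : ∀ m : M, (∑ u2 : J × Fin n, ((n:ℝ))⁻¹ * ∑ z : Fin n → Z,
        (if z u2.2 = v then P z u2.1 m else 0))
        = ∑ j, ∑ t : Fin n, ((n:ℝ))⁻¹ * ∑ z : Fin n → Z, (if z t = v then P z j m else 0) :=
      fun m => Fintype.sum_prod_type (fun u2 : J × Fin n =>
        ((n:ℝ))⁻¹ * ∑ z : Fin n → Z, (if z u2.2 = v then P z u2.1 m else 0))
    rw [Finset.sum_congr rfl fun m _ => e1 m,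
      sum3_comm (fun (m : M) (j : J) (t : Fin n) =>
        ((n:ℝ))⁻¹ * ∑ z : Fin n → Z, (if z t = v then P z j m else 0))]
    have e4 : ∀ t : Fin n, (∑ j, ∑ m, ((n:ℝ))⁻¹ * ∑ z : Fin n → Z,
        (if z t = v then P z j m else 0)) = ((n:ℝ))⁻¹ * qZ v := by
      intro t
      rw [← key t, Finset.mul_sum]
      exact Finset.sum_congr rfl fun j _ => (Finset.mul_sum _ _ _).symm
    rw [Finset.sum_congr rfl fun t _ => e4 t, Finset.sum_const, Finset.card_univ,
      Fintype.card_fin, nsmul_eq_mul]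
    field_simp
  -- Step 1: the per-(m,j) chain inequality
  have hS1 : (∑ m, ∑ j, ∑ t : Fin n, ∑ v : Z,
      (∑ z : Fin n → Z, if z t = v then P z j m else 0) *
        Real.log ((∑ z : Fin n → Z, if z t = v then P z j m else 0) /
          ((∑ z : Fin n → Z, P z j m) * qZ v)))
      ≤ ∑ m, ∑ j, ∑ z : Fin n → Z, P z j m *
          Real.log (P z j m / ((∑ z' : Fin n → Z, P z' j m) * ∏ t, qZ (z t))) := by
    refine Finset.sum_le_sum fun m _ => Finset.sum_le_sum fun j _ => ?_
    exact step1core qZ hq (fun z => P z j m) (fun z => hPnn z j m)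
      (fun z h t => hsupp z j m h t) _ rfl _ (fun t v => rfl)
  -- Step 2: I(W; Z^n) ≤ log |M|
  have hS2 : (∑ m, ∑ j, ∑ z : Fin n → Z, P z j m *
      Real.log (P z j m / ((∑ z' : Fin n → Z, P z' j m) * ∏ t, qZ (z t))))
      ≤ Real.log (Fintype.card M) := by
    have hdec : ∀ (m : M) (j : J) (z : Fin n → Z),
        P z j m * Real.log (P z j m / ((∑ z' : Fin n → Z, P z' j m) * ∏ t, qZ (z t)))
        = P z j m * Real.log (P z j m / ((∏ t, qZ (z t)) * (Fintype.card J : ℝ)⁻¹))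
          + P z j m * Real.log (((Fintype.card J : ℝ) * ∑ z' : Fin n → Z, P z' j m)⁻¹) := by
      intro m j z
      rcases eq_or_lt_of_le (hPnn z j m) with h0 | hpos
      · rw [← h0]; ring
      · have hA : 0 < ∑ z' : Fin n → Z, P z' j m :=
          lt_of_lt_of_le hpos (Finset.single_le_sum (fun z' _ => hPnn z' j m) (Finset.mem_univ z))
        have hQ : 0 < ∏ t, qZ (z t) := Finset.prod_pos fun t _ => hsupp z j m hpos t
        have harg : P z j m / ((∑ z' : Fin n → Z, P z' j m) * ∏ t, qZ (z t))
            = (P z j m / ((∏ t, qZ (z t)) * (Fintype.card J : ℝ)⁻¹))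
              * (((Fintype.card J : ℝ) * ∑ z' : Fin n → Z, P z' j m)⁻¹) := by
          field_simp
        rw [harg, Real.log_mul
          (ne_of_gt (div_pos hpos (mul_pos hQ (inv_pos.mpr hJR))))
          (ne_of_gt (inv_pos.mpr (mul_pos hJR hA))), mul_add]
    have e1 : (∑ m, ∑ j, ∑ z : Fin n → Z, P z j m *
        Real.log (P z j m / ((∑ z' : Fin n → Z, P z' j m) * ∏ t, qZ (z t))))
        = (∑ m, ∑ j, ∑ z : Fin n → Z, P z j m *
            Real.log (P z j m / ((∏ t, qZ (z t)) * (Fintype.card J : ℝ)⁻¹)))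
          + ∑ m, ∑ j, (∑ z : Fin n → Z, P z j m) *
              Real.log (((Fintype.card J : ℝ) * ∑ z' : Fin n → Z, P z' j m)⁻¹) := by
      rw [← Finset.sum_add_distrib]
      refine Finset.sum_congr rfl fun m _ => ?_
      rw [← Finset.sum_add_distrib]
      refine Finset.sum_congr rfl fun j _ => ?_
      rw [Finset.sum_congr rfl fun z _ => hdec m j z, Finset.sum_add_distrib, ← Finset.sum_mul]
    rw [e1]
    have b1 : (∑ m, ∑ j, ∑ z : Fin n → Z, P z j m *
        Real.log (P z j m / ((∏ t, qZ (z t)) * (Fintype.card J : ℝ)⁻¹))) ≤ 0 := by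
      refine Finset.sum_nonpos fun m _ => Finset.sum_nonpos fun j _ =>
        Finset.sum_nonpos fun z _ => ?_
      exact mul_log_nonpos (hPnn z j m) (hble z j m)
    have hub : ∀ (m : M) (j : J),
        (∑ z : Fin n → Z, P z j m) *
          Real.log (((Fintype.card J : ℝ) * ∑ z' : Fin n → Z, P z' j m)⁻¹)
        ≤ (∑ z : Fin n → Z, P z j m) * Real.log (Fintype.card M)
          + (((Fintype.card M : ℝ) * (Fintype.card J : ℝ))⁻¹ - ∑ z : Fin n → Z, P z j m) := by
      intro m j
      rcases eq_or_lt_of_le (Finset.sum_nonneg fun z _ => hPnn z j m) with h0 | hA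
      · rw [← h0]
        simp
        positivity
      · have h2 : (((Fintype.card J : ℝ) * ∑ z' : Fin n → Z, P z' j m)⁻¹)
            = (Fintype.card M : ℝ) *
              (((Fintype.card M : ℝ) * (Fintype.card J : ℝ))⁻¹ / (∑ z' : Fin n → Z, P z' j m)) := by
          field_simp
        rw [h2, Real.log_mul (ne_of_gt hMR)
          (ne_of_gt (div_pos (inv_pos.mpr (mul_pos hMR hJR)) hA)), mul_add]
        have hkey := mul_log_le (le_of_lt hA) (inv_pos.mpr (mul_pos hMR hJR))
        linarith
    have b2 : (∑ m, ∑ j, (∑ z : Fin n → Z, P z j m) *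
        Real.log (((Fintype.card J : ℝ) * ∑ z' : Fin n → Z, P z' j m)⁻¹))
        ≤ Real.log (Fintype.card M) := by
      calc (∑ m, ∑ j, (∑ z : Fin n → Z, P z j m) *
          Real.log (((Fintype.card J : ℝ) * ∑ z' : Fin n → Z, P z' j m)⁻¹))
          ≤ ∑ m, ∑ j, ((∑ z : Fin n → Z, P z j m) * Real.log (Fintype.card M)
            + (((Fintype.card M : ℝ) * (Fintype.card J : ℝ))⁻¹ - ∑ z : Fin n → Z, P z j m)) :=
            Finset.sum_le_sum fun m _ => Finset.sum_le_sum fun j _ => hub m j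
        _ = (∑ m, ∑ j, ∑ z : Fin n → Z, P z j m) * Real.log (Fintype.card M)
            + ((Fintype.card M : ℝ) * (Fintype.card J : ℝ)
                * ((Fintype.card M : ℝ) * (Fintype.card J : ℝ))⁻¹
              - ∑ m, ∑ j, ∑ z : Fin n → Z, P z j m) := by
            rw [Finset.sum_congr rfl fun m (_ : m ∈ Finset.univ) => Finset.sum_add_distrib,
              Finset.sum_add_distrib]
            congr 1
            · rw [Finset.sum_mul]
              exact Finset.sum_congr rfl fun m _ => (Finset.sum_mul _ _ _).symm
            · rw [Finset.sum_congr rfl fun m (_ : m ∈ Finset.univ) => Finset.sum_sub_distrib _ _,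
                Finset.sum_sub_distrib]
              congr 1
              simp [Finset.sum_const, Finset.card_univ]
              ring
        _ = Real.log (Fintype.card M) := by
            rw [hAsum, mul_inv_cancel₀ (ne_of_gt (mul_pos hMR hJR))]
            ring
    linarith
  -- assemble: MI = n⁻¹ * S
  have hMIeq : MI (fun (mjt : M × J × Fin n) (zv : Z) =>
        ((n : ℝ))⁻¹ * ∑ z : Fin n → Z,
          (if z mjt.2.2 = zv then P z mjt.2.1 mjt.1 else 0))
      = (n:ℝ)⁻¹ * ∑ m, ∑ j, ∑ t : Fin n, ∑ v : Z,
          (∑ z : Fin n → Z, if z t = v then P z j m else 0) *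
            Real.log ((∑ z : Fin n → Z, if z t = v then P z j m else 0) /
              ((∑ z : Fin n → Z, P z j m) * qZ v)) := by
    unfold MI
    rw [Fintype.sum_prod_type, Finset.mul_sum]
    refine Finset.sum_congr rfl fun m _ => ?_
    rw [Fintype.sum_prod_type, Finset.mul_sum]
    refine Finset.sum_congr rfl fun j _ => ?_
    rw [Finset.mul_sum]
    refine Finset.sum_congr rfl fun t _ => ?_
    rw [Finset.mul_sum]
    refine Finset.sum_congr rfl fun v _ => ?_
    simp only
    rw [hmargV m j t, hmargU v]
    have harg : ((n:ℝ)⁻¹ * ∑ z : Fin n → Z, (if z t = v then P z j m else 0))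
        / (((n:ℝ)⁻¹ * ∑ z : Fin n → Z, P z j m) * qZ v)
        = (∑ z : Fin n → Z, (if z t = v then P z j m else 0))
          / ((∑ z : Fin n → Z, P z j m) * qZ v) := by
      rw [mul_assoc, mul_div_mul_left _ _ (inv_ne_zero (ne_of_gt hnR))]
    rw [harg]
    ring
  rw [hMIeq]
  calc (n:ℝ)⁻¹ * _ ≤ (n:ℝ)⁻¹ * Real.log (Fintype.card M) :=
        mul_le_mul_of_nonneg_left (le_trans hS1 hS2) (inv_nonneg.mpr (le_of_lt hnR))
    _ = Real.log (Fintype.card M) / n := (div_eq_inv_mul _ _).symm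

end RCS
end
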